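/- arXiv:1209.1384 — 15 statements merged into one kernel-verified Lean document; each statement's English description precedes it below -/
import Mathlib

section
/- Let p be a prime, n ≥ 1, and E a Hausdorff topological vector space over ℚ_p with continuous addition and continuous scalar multiplication. Let a : ℕ^n → E and f : (ℤ_p)^n → E, and suppose that for every x ∈ (ℤ_p)^n the net of finite partial sums ∑_{ν ∈ Φ} C(x,ν)·a_ν (over finite subsets Φ ⊆ ℕ^n, directed by inclusion) converges to f(x). Then for every ν ∈ ℕ^n one has a_ν = ∑_{μ ≤ ν} (−1)^{|ν|−|μ|} C(ν,μ)·f(μ); in particular the family (a_ν) is uniquely determined by f. -/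
/-!
At a natural point `μ` every `C(μ, ν)` with `ν ≰ μ` vanishes, so the Mahler series collapses to the
finite sum `f μ = ∑_{ν ≤ μ} C(μ, ν) a_ν`, and the limit is unique because `E` is Hausdorff. This
triangular system is inverted by binomial inversion in each coordinate: the kernel
`∑_{κ ≤ μ ≤ ν} (-1)^{|ν|-|μ|} C(ν, μ) C(μ, κ)` factors over the coordinates, and each factor equals
`C(ν_i, κ_i) (1 - 1)^{ν_i - κ_i}`.
-/

open Finset

theorem sum_Icc_neg_one_pow_mul_choose_mul_choose (l N : ℕ) :
    ∑ m ∈ Icc l N, (-1 : ℤ) ^ (N - m) * (N.choose m * m.choose l) = if l = N then 1 else 0 := by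
  rcases le_or_gt l N with hlN | hNl
  · obtain ⟨M, rfl⟩ := Nat.exists_eq_add_of_le hlN
    have hterm : ∀ j ∈ range (M + 1), (-1 : ℤ) ^ (l + M - (l + j)) *
        ((l + M).choose (l + j) * (l + j).choose l) =
        (l + M).choose l * ((-1) ^ M * ((-1) ^ j * M.choose j)) := by
      intro j hj
      have hjM : j ≤ M := Nat.lt_succ_iff.mp (mem_range.mp hj)
      -- `(-1)^(M-j) = (-1)^M (-1)^j` because `(-1)^(2j) = 1`
      have hsign : (-1 : ℤ) ^ (M - j) = (-1) ^ M * (-1) ^ j := by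
        rw [← Nat.sub_add_cancel hjM, pow_add, Nat.add_sub_cancel, mul_assoc, ← pow_add,
          ← two_mul, pow_mul, neg_one_sq, one_pow, mul_one]
      rw [Nat.add_sub_add_left, hsign, ← Nat.cast_mul, Nat.choose_mul (Nat.le_add_right l j),
        Nat.add_sub_cancel_left, Nat.add_sub_cancel_left]
      push_cast
      ring
    rw [← Ico_add_one_right_eq_Icc, sum_Ico_eq_sum_range, add_assoc,
      Nat.add_sub_cancel_left, sum_congr rfl hterm, ← mul_sum, ← mul_sum,
      Int.alternating_sum_range_choose]
    rcases M with _ | M <;> simp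
  · simp [Icc_eq_empty_of_lt hNl, hNl.ne']

theorem pow_sum_sub_sum_eq_prod_pow {ι M : Type*} [CommMonoid M] (s : Finset ι) (x : M)
    {μ ν : ι → ℕ} (h : ∀ i ∈ s, μ i ≤ ν i) :
    x ^ (∑ i ∈ s, ν i - ∑ i ∈ s, μ i) = ∏ i ∈ s, x ^ (ν i - μ i) := by
  rw [← sum_tsub_distrib s h, prod_pow_eq_pow_sum]

section MultiIndex

variable {ι : Type*} [Fintype ι] [DecidableEq ι]

theorem sum_Icc_neg_one_pow_mul_prod_choose_mul_prod_choose (κ ν : ι → ℕ) :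
    ∑ μ ∈ Icc κ ν, (-1 : ℤ) ^ (∑ i, ν i - ∑ i, μ i) *
        ((∏ i, ((ν i).choose (μ i) : ℤ)) * ∏ i, ((μ i).choose (κ i) : ℤ)) =
      if κ = ν then 1 else 0 := by
  have hfactor : ∀ μ ∈ Icc κ ν, (-1 : ℤ) ^ (∑ i, ν i - ∑ i, μ i) *
      ((∏ i, ((ν i).choose (μ i) : ℤ)) * ∏ i, ((μ i).choose (κ i) : ℤ)) =
      ∏ i, (-1 : ℤ) ^ (ν i - μ i) * ((ν i).choose (μ i) * (μ i).choose (κ i)) := by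
    intro μ hμ
    rw [pow_sum_sub_sum_eq_prod_pow _ _ fun i _ => (mem_Icc.mp hμ).2 i, prod_mul_distrib,
      prod_mul_distrib]
  rw [sum_congr rfl hfactor, Pi.Icc_eq, ← prod_univ_sum (t := fun i => Icc (κ i) (ν i))
    (f := fun i m => (-1 : ℤ) ^ (ν i - m) * ((ν i).choose m * m.choose (κ i)))]
  simp only [sum_Icc_neg_one_pow_mul_choose_mul_choose, prod_boole, mem_univ, true_implies,
    funext_iff]

theorem hasSum_prod_choose_smul {R E : Type*} [CommSemiring R] [AddCommMonoid E] [Module R E]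
    [TopologicalSpace E] (a : (ι → ℕ) → E) (μ : ι → ℕ) :
    HasSum (fun ν => (∏ i, ((μ i).choose (ν i) : R)) • a ν)
      (∑ ν ∈ Iic μ, (∏ i, ((μ i).choose (ν i) : R)) • a ν) := by
  refine hasSum_sum_of_ne_finset_zero fun ν hν => ?_
  obtain ⟨i, hi⟩ : ∃ i, μ i < ν i := by simpa [Pi.le_def] using hν
  rw [prod_eq_zero (mem_univ i) (by simp [Nat.choose_eq_zero_of_lt hi]), zero_smul]

theorem eq_sum_Iic_neg_one_pow_mul_prod_choose_smul {R E : Type*} [CommRing R] [AddCommGroup E]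
    [Module R E] {a g : (ι → ℕ) → E}
    (hg : ∀ μ, g μ = ∑ ν ∈ Iic μ, (∏ i, ((μ i).choose (ν i) : R)) • a ν) (ν : ι → ℕ) :
    a ν = ∑ μ ∈ Iic ν, ((-1 : R) ^ (∑ i, ν i - ∑ i, μ i) * ∏ i, ((ν i).choose (μ i) : R)) •
      g μ := by
  have hdelta : ∀ κ, ∑ μ ∈ Icc κ ν, (-1 : R) ^ (∑ i, ν i - ∑ i, μ i) *
      ((∏ i, ((ν i).choose (μ i) : R)) * ∏ i, ((μ i).choose (κ i) : R)) =
      if κ = ν then 1 else 0 := fun κ => by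
    exact_mod_cast congrArg (Int.cast : ℤ → R)
      (sum_Icc_neg_one_pow_mul_prod_choose_mul_prod_choose κ ν)
  symm
  calc _ = ∑ μ ∈ Iic ν, ∑ κ ∈ Iic μ, ((-1 : R) ^ (∑ i, ν i - ∑ i, μ i) *
          ((∏ i, ((ν i).choose (μ i) : R)) * ∏ i, ((μ i).choose (κ i) : R))) • a κ := by
        simp only [hg, smul_sum, smul_smul, mul_assoc]
    _ = ∑ κ ∈ Iic ν, (if κ = ν then (1 : R) else 0) • a κ := by
        rw [sum_comm' (t' := Iic ν) (s' := fun κ => Icc κ ν) fun μ κ => by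
          simp only [mem_Iic, mem_Icc]
          exact ⟨fun h => ⟨⟨h.2, h.1⟩, h.2.trans h.1⟩, fun h => ⟨h.1.2, h.1.1⟩⟩]
        simp only [← sum_smul, hdelta]
    _ = a ν := by simp

end MultiIndex

theorem mahler_coefficients_unique_general (p : ℕ) [Fact p.Prime] (n : ℕ)
    (E : Type*) [AddCommGroup E] [Module ℚ_[p] E] [TopologicalSpace E] [T2Space E]
    (a : (Fin n → ℕ) → E) (f : (Fin n → ℤ_[p]) → E)
    (hf : ∀ x : Fin n → ℤ_[p],
      HasSum (fun ν : Fin n → ℕ =>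
        (∏ i, ((Ring.choose (x i) (ν i) : ℤ_[p]) : ℚ_[p])) • a ν) (f x)) :
    ∀ ν : Fin n → ℕ,
      a ν = ∑ μ ∈ Finset.Iic ν,
        ((-1 : ℚ_[p]) ^ ((∑ i, ν i) - (∑ i, μ i)) * ∏ i, ((ν i).choose (μ i) : ℚ_[p])) •
          f (fun i => ((μ i : ℤ_[p]))) :=
  eq_sum_Iic_neg_one_pow_mul_prod_choose_smul fun μ =>
    (hf _).unique <| by
      simpa only [Ring.choose_natCast, PadicInt.coe_natCast] using hasSum_prod_choose_smul a μ

/-- **Uniqueness of Mahler coefficients** (Lemma `detmind`).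
If `E` is a Hausdorff topological `ℚ_p`-vector space and the net of finite partial sums
`∑_{ν ∈ Φ} C(x,ν) • a_ν` converges to `f x` for every `x ∈ (ℤ_p)^n`, then the coefficients
are recovered from `f` by `a_ν = ∑_{μ ≤ ν} (−1)^{|ν|−|μ|} C(ν,μ) • f μ`. -/
theorem mahler_coefficients_unique (p : ℕ) [Fact p.Prime] (n : ℕ) (hn : 1 ≤ n)
    (E : Type*) [AddCommGroup E] [Module ℚ_[p] E] [TopologicalSpace E]
    [ContinuousAdd E] [ContinuousSMul ℚ_[p] E] [T2Space E]
    (a : (Fin n → ℕ) → E) (f : (Fin n → ℤ_[p]) → E)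
    (hf : ∀ x : Fin n → ℤ_[p],
      HasSum (fun ν : Fin n → ℕ =>
        (∏ i, ((Ring.choose (x i) (ν i) : ℤ_[p]) : ℚ_[p])) • a ν) (f x)) :
    ∀ ν : Fin n → ℕ,
      a ν = ∑ μ ∈ Finset.Iic ν,
        ((-1 : ℚ_[p]) ^ ((∑ i, ν i) - (∑ i, μ i)) * ∏ i, ((ν i).choose (μ i) : ℚ_[p])) •
          f (fun i => ((μ i : ℤ_[p]))) :=
  mahler_coefficients_unique_general p n E a f hf
end

section
/- Let p be a prime, n ≥ 1, and E an ultrametric normed space over ℚ_p. Let f : (ℤ_p)^n → E be continuous, with Mahler coefficients a_ν(f) for ν ∈ ℕ^n. Then: (i) ‖a_ν(f)‖ → 0 along the cofinite filter on ℕ^n (equivalently, as |ν| → ∞); (ii) the Mahler series ∑_{ν ∈ ℕ^n} C(x,ν)·a_ν(f) converges to f uniformly on (ℤ_p)^n (i.e., the net of finite partial sums converges to f in the supremum norm); (iii) sup_{ν ∈ ℕ^n} ‖a_ν(f)‖ = sup_{x ∈ (ℤ_p)^n} ‖f(x)‖. -/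
/-!
Splitting off the first coordinate, the Mahler coefficient `a_{(k, ν)}(f)` is the `ν`-th Mahler
coefficient of `y ↦ Δ^k (t ↦ f (t, y)) 0`. Applied to the curried function `ℤ_p → C(ℤ_p^n, E)`,
Mahler's one-variable theorem says that these `k`-th differences tend to `0` uniformly in `y`, and
Mahler coefficients are bounded by the sup norm, so induction on `n` gives `a_ν(f) → 0`.
Newton's inversion formula `f(m) = ∑_{ν ≤ m} C(m, ν) a_ν(f)` shows that at points `m ∈ ℕ^n` a
partial sum of the Mahler series misses `f(m)` by an ultrametric combination of the omitted
coefficients; as `ℕ^n` is dense this bound holds everywhere, which gives uniform convergence.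
Both inequalities between the sups are then instances of the ultrametric inequality, the
coefficients `C(x, ν)` being `p`-adic integers.
-/

open Filter Finset Topology
open scoped fwdDiff

lemma ContinuousMap.fwdDiff_iter_apply {M X G : Type*} [AddCommMonoid M] [TopologicalSpace X]
    [AddCommGroup G] [TopologicalSpace G] [IsTopologicalAddGroup G]
    (h : M) (g : M → C(X, G)) (k : ℕ) (y : M) (x : X) :
    Δ_[h] ^[k] g y x = Δ_[h] ^[k] (g · x) y := by
  simp [fwdDiff_iter_eq_sum_shift]

lemma IsUltrametricDist.norm_sum_smul_le {ι 𝕜 E : Type*} [SeminormedRing 𝕜]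
    [SeminormedAddCommGroup E] [IsUltrametricDist E] [SMulZeroClass 𝕜 E] [IsBoundedSMul 𝕜 E]
    {s : Finset ι} {c : ι → 𝕜} {v : ι → E} {C : ℝ} (hC : 0 ≤ C)
    (hc : ∀ i ∈ s, ‖c i‖ ≤ 1) (hv : ∀ i ∈ s, ‖v i‖ ≤ C) : ‖∑ i ∈ s, c i • v i‖ ≤ C :=
  norm_sum_le_of_forall_le_of_nonneg hC fun i hi =>
    (norm_smul_le _ _).trans <| (mul_le_of_le_one_left (norm_nonneg _) (hc i hi)).trans (hv i hi)

lemma tendsto_uncurry_cofinite_of_norm_le {α β E : Type*} [SeminormedAddGroup E]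
    {u : α → β → E} {b : α → ℝ} (hb : Tendsto b cofinite (𝓝 0))
    (hu : ∀ a, Tendsto (u a) cofinite (𝓝 0)) (hub : ∀ a x, ‖u a x‖ ≤ b a) :
    Tendsto (Function.uncurry u) cofinite (𝓝 0) := by
  refine NormedAddGroup.tendsto_nhds_zero.2 fun ε hε => eventually_cofinite.2 ?_
  have hbε : {a | ¬ b a < ε}.Finite := eventually_cofinite.1 (hb.eventually (gt_mem_nhds hε))
  have huε (a : α) : {x | ¬ ‖u a x‖ < ε}.Finite :=
    eventually_cofinite.1 (NormedAddGroup.tendsto_nhds_zero.1 (hu a) ε hε)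
  refine (hbε.biUnion fun a _ => (Set.finite_singleton a).prod (huε a)).subset ?_
  rintro ⟨a, x⟩ hax
  exact Set.mem_biUnion (x := a) (fun hba => hax ((hub a x).trans_lt hba)) ⟨rfl, hax⟩

variable {p : ℕ} [Fact p.Prime]

lemma PadicInt.fwdDiff_tendsto_zero_of_normedSpace {E : Type*} [NormedAddCommGroup E]
    [NormedSpace ℚ_[p] E] [IsUltrametricDist E] (f : C(ℤ_[p], E)) :
    Tendsto (Δ_[1] ^[·] f 0) atTop (𝓝 0) := by
  let _ : Module ℤ_[p] E := Module.compHom E PadicInt.Coe.ringHom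
  have : IsBoundedSMul ℤ_[p] E := .of_norm_smul_le fun r x => by
    change ‖(r : ℚ_[p]) • x‖ ≤ ‖r‖ * ‖x‖
    rw [norm_smul, PadicInt.padic_norm_e_of_padicInt]
  exact PadicInt.fwdDiff_tendsto_zero f

lemma sum_Iic_cons {n : ℕ} {M : Type*} [AddCommMonoid M] (g : (Fin (n + 1) → ℕ) → M)
    (k : ℕ) (ν : Fin n → ℕ) :
    ∑ μ ∈ Iic (Fin.cons k ν : Fin (n + 1) → ℕ), g μ =
      ∑ j ∈ range (k + 1), ∑ μ ∈ Iic ν, g (Fin.cons j μ) := by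
  rw [sum_sigma']
  refine sum_nbij' (fun μ => ⟨μ 0, Fin.tail μ⟩) (fun q => Fin.cons q.1 q.2) ?_ ?_ ?_ ?_ ?_
  · intro μ hμ
    rw [mem_Iic, ← Fin.cons_self_tail μ, Fin.cons_le_cons] at hμ
    simpa [Nat.lt_succ_iff] using hμ
  · rintro ⟨j, μ⟩ hjμ
    simp_all [Fin.cons_le_cons]
  · intro μ _; exact Fin.cons_self_tail μ
  · intro q _; simp
  · intro μ _; rw [Fin.cons_self_tail]

noncomputable def multiMahler {n : ℕ} (ν : Fin n → ℕ) (x : Fin n → ℤ_[p]) : ℚ_[p] :=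
  ∏ i, (mahler (ν i) (x i) : ℚ_[p])

lemma continuous_multiMahler {n : ℕ} (ν : Fin n → ℕ) : Continuous (multiMahler (p := p) ν) :=
  continuous_finsetProd _ fun i _ =>
    continuous_subtype_val.comp ((mahler (ν i)).continuous.comp (continuous_apply i))

lemma norm_multiMahler_le_one {n : ℕ} (ν : Fin n → ℕ) (x : Fin n → ℤ_[p]) :
    ‖multiMahler ν x‖ ≤ 1 := by
  rw [multiMahler, norm_prod]
  exact prod_le_one (fun _ _ => norm_nonneg _) fun i _ =>
    (PadicInt.padic_norm_e_of_padicInt _).trans_le (PadicInt.norm_le_one _)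

lemma multiMahler_natCast {n : ℕ} (ν m : Fin n → ℕ) :
    multiMahler ν (fun i => (m i : ℤ_[p])) = ∏ i, ((m i).choose (ν i) : ℚ_[p]) := by
  simp [multiMahler, mahler_natCast_eq]

section Algebraic

variable {F : Type*} [AddCommGroup F] [Module ℚ_[p] F]

noncomputable def mahlerCoeff {n : ℕ} (f : (Fin n → ℤ_[p]) → F) (ν : Fin n → ℕ) : F :=
  ∑ μ ∈ Iic ν,
    ((-1 : ℚ_[p]) ^ ((∑ i, ν i) - (∑ i, μ i)) * ∏ i, ((ν i).choose (μ i) : ℚ_[p])) •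
      f (fun i => ((μ i : ℤ_[p])))

lemma mahlerCoeff_cons {n : ℕ} (f : (Fin (n + 1) → ℤ_[p]) → F) (k : ℕ) (ν : Fin n → ℕ) :
    mahlerCoeff f (Fin.cons k ν) =
      mahlerCoeff (fun y => Δ_[1] ^[k] (fun t => f (Fin.cons t y)) 0) ν := by
  simp only [mahlerCoeff, fwdDiff_iter_eq_sum_shift, smul_sum, sum_Iic_cons]
  rw [sum_comm]
  refine sum_congr rfl fun μ hμ => sum_congr rfl fun j hj => ?_
  have hjk : j ≤ k := Nat.lt_succ_iff.1 (mem_range.1 hj)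
  have hμν : ∑ i, μ i ≤ ∑ i, ν i := sum_le_sum fun i _ => mem_Iic.1 hμ i
  have hexp : k + ∑ i, ν i - (j + ∑ i, μ i) = (k - j) + (∑ i, ν i - ∑ i, μ i) := by omega
  have hpt : (fun i => ((Fin.cons j μ : Fin (n + 1) → ℕ) i : ℤ_[p])) =
      Fin.cons (0 + j • 1 : ℤ_[p]) (fun i => (μ i : ℤ_[p])) := by
    ext i; refine Fin.cases ?_ (fun i => ?_) i <;> simp
  rw [hpt, ← Int.cast_smul_eq_zsmul ℚ_[p], smul_smul, Fin.sum_cons, Fin.sum_cons,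
    Fin.prod_univ_succ, hexp, pow_add]
  simp only [Fin.cons_zero, Fin.cons_succ]
  push_cast
  ring_nf

theorem sum_Iic_prod_choose_smul_mahlerCoeff {n : ℕ} (f : (Fin n → ℤ_[p]) → F)
    (m : Fin n → ℕ) :
    ∑ ν ∈ Iic m, (∏ i, ((m i).choose (ν i) : ℚ_[p])) • mahlerCoeff f ν =
      f (fun i => (m i : ℤ_[p])) := by
  induction n with
  | zero =>
    have hm : Iic m = {m} :=
      eq_singleton_iff_unique_mem.2 ⟨mem_Iic.2 le_rfl, fun ν _ => Subsingleton.elim ν m⟩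
    simp [mahlerCoeff, hm]
  | succ n ih =>
    rw [← Fin.cons_self_tail m, sum_Iic_cons]
    have hstep (j : ℕ) : ∑ μ ∈ Iic (Fin.tail m),
        (∏ i, ((Fin.cons (m 0) (Fin.tail m) : Fin (n + 1) → ℕ) i).choose
          ((Fin.cons j μ : Fin (n + 1) → ℕ) i) : ℚ_[p]) • mahlerCoeff f (Fin.cons j μ) =
        (m 0).choose j •
          Δ_[1] ^[j] (fun t => f (Fin.cons t fun i => (Fin.tail m i : ℤ_[p]))) 0 := by
      simp only [Fin.prod_univ_succ, Fin.cons_zero, Fin.cons_succ, mahlerCoeff_cons, mul_smul,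
        ← smul_sum, ih, Nat.cast_smul_eq_nsmul]
    simp only [hstep, ← shift_eq_sum_fwdDiff_iter]
    congr 1
    ext i; refine Fin.cases ?_ (fun i => ?_) i <;> simp [Fin.tail]

noncomputable def mahlerPartialSum {n : ℕ} (f : (Fin n → ℤ_[p]) → F) (Φ : Finset (Fin n → ℕ))
    (x : Fin n → ℤ_[p]) : F :=
  ∑ ν ∈ Φ, multiMahler ν x • mahlerCoeff f ν

lemma sub_mahlerPartialSum_natCast {n : ℕ} (f : (Fin n → ℤ_[p]) → F) (Φ : Finset (Fin n → ℕ))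
    (m : Fin n → ℕ) :
    f (fun i => (m i : ℤ_[p])) - mahlerPartialSum f Φ (fun i => (m i : ℤ_[p])) =
      ∑ ν ∈ Iic m \ Φ, multiMahler ν (fun i => (m i : ℤ_[p])) • mahlerCoeff f ν := by
  have hvanish : ∀ ν ∈ Φ, ν ∉ Iic m ∩ Φ →
      multiMahler ν (fun i => (m i : ℤ_[p])) • mahlerCoeff f ν = 0 := by
    intro ν hνΦ hν
    obtain ⟨i, hi⟩ := not_forall.1 fun hle => hν (mem_inter.2 ⟨mem_Iic.2 hle, hνΦ⟩)
    rw [multiMahler_natCast, prod_eq_zero (mem_univ i), zero_smul]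
    simp [Nat.choose_eq_zero_of_lt (not_le.1 hi)]
  rw [mahlerPartialSum, ← sum_subset inter_subset_right hvanish, ← sdiff_inter_self_left,
    sum_sdiff_eq_sub inter_subset_left, ← sum_Iic_prod_choose_smul_mahlerCoeff f m]
  simp only [multiMahler_natCast]

end Algebraic

section Normed

variable {F : Type*} [NormedAddCommGroup F] [NormedSpace ℚ_[p] F] [IsUltrametricDist F]

lemma norm_mahlerCoeff_le {n : ℕ} {f : (Fin n → ℤ_[p]) → F} {C : ℝ} (hC : 0 ≤ C)
    (hf : ∀ x, ‖f x‖ ≤ C) (ν : Fin n → ℕ) : ‖mahlerCoeff f ν‖ ≤ C := by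
  refine IsUltrametricDist.norm_sum_smul_le hC (fun μ _ => ?_) fun μ _ => hf _
  have hcoeff : (-1 : ℚ_[p]) ^ ((∑ i, ν i) - (∑ i, μ i)) * ∏ i, ((ν i).choose (μ i) : ℚ_[p]) =
      (((-1) ^ ((∑ i, ν i) - (∑ i, μ i)) * ∏ i, ((ν i).choose (μ i) : ℤ) : ℤ) : ℚ_[p]) := by
    push_cast; rfl
  rw [hcoeff]
  exact Padic.norm_int_le_one _

theorem tendsto_mahlerCoeff {n : ℕ} {f : (Fin n → ℤ_[p]) → F} (hf : Continuous f) :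
    Tendsto (mahlerCoeff f) cofinite (𝓝 0) := by
  induction n with
  | zero => simp [cofinite_eq_bot]
  | succ n ih =>
    let g : C(ℤ_[p], C(Fin n → ℤ_[p], F)) :=
      ContinuousMap.curry ⟨fun q => f (Fin.cons q.1 q.2),
        hf.comp (continuous_fst.finCons (A := fun _ => ℤ_[p]) continuous_snd)⟩
    let b (k : ℕ) : C(Fin n → ℤ_[p], F) := Δ_[1] ^[k] g 0
    have hcons (k : ℕ) (ν : Fin n → ℕ) : mahlerCoeff f (Fin.cons k ν) = mahlerCoeff (b k) ν := by
      rw [mahlerCoeff_cons]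
      congr 1
      ext y
      exact (ContinuousMap.fwdDiff_iter_apply 1 g k 0 y).symm
    have hdecay : Tendsto (fun k => ‖b k‖) cofinite (𝓝 0) := by
      simpa [Nat.cofinite_eq_atTop] using (PadicInt.fwdDiff_tendsto_zero_of_normedSpace g).norm
    have huncurry := tendsto_uncurry_cofinite_of_norm_le hdecay (fun k => ih (b k).continuous)
      (fun k => norm_mahlerCoeff_le (norm_nonneg _) (b k).norm_coe_le_norm)
    convert huncurry.comp (Fin.consEquiv fun _ => ℕ).symm.injective.tendsto_cofinite using 1
    ext ν
    conv_lhs => rw [← Fin.cons_self_tail ν]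
    exact hcons _ _

lemma continuous_mahlerPartialSum {n : ℕ} (f : (Fin n → ℤ_[p]) → F) (Φ : Finset (Fin n → ℕ)) :
    Continuous (mahlerPartialSum f Φ) :=
  continuous_finsetSum _ fun ν _ => (continuous_multiMahler ν).smul continuous_const

lemma norm_mahlerPartialSum_le {n : ℕ} {f : (Fin n → ℤ_[p]) → F} {C : ℝ} (hC : 0 ≤ C)
    (hf : ∀ ν, ‖mahlerCoeff f ν‖ ≤ C) (Φ : Finset (Fin n → ℕ)) (x : Fin n → ℤ_[p]) :
    ‖mahlerPartialSum f Φ x‖ ≤ C :=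
  IsUltrametricDist.norm_sum_smul_le hC (fun ν _ => norm_multiMahler_le_one ν x) fun ν _ => hf ν

lemma norm_sub_mahlerPartialSum_le {n : ℕ} {f : (Fin n → ℤ_[p]) → F} (hf : Continuous f)
    {Φ : Finset (Fin n → ℕ)} {ε : ℝ} (hε : 0 ≤ ε) (hΦ : ∀ ν ∉ Φ, ‖mahlerCoeff f ν‖ ≤ ε)
    (x : Fin n → ℤ_[p]) : ‖f x - mahlerPartialSum f Φ x‖ ≤ ε := by
  have hdense : DenseRange (Pi.map fun (_ : Fin n) (k : ℕ) => (k : ℤ_[p])) :=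
    DenseRange.piMap fun _ => PadicInt.denseRange_natCast
  refine hdense.induction_on x
    (isClosed_le (hf.sub (continuous_mahlerPartialSum f Φ)).norm continuous_const) fun m => ?_
  change ‖f (fun i => (m i : ℤ_[p])) - mahlerPartialSum f Φ (fun i => (m i : ℤ_[p]))‖ ≤ ε
  rw [sub_mahlerPartialSum_natCast]
  exact IsUltrametricDist.norm_sum_smul_le hε (fun ν _ => norm_multiMahler_le_one ν _)
    fun ν hν => hΦ ν (mem_sdiff.1 hν).2

theorem tendstoUniformly_mahlerPartialSum {n : ℕ} {f : (Fin n → ℤ_[p]) → F} (hf : Continuous f) :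
    TendstoUniformly (mahlerPartialSum f) f atTop := by
  refine Metric.tendstoUniformly_iff.2 fun ε hε => ?_
  have hnorm := tendsto_zero_iff_norm_tendsto_zero.1 (tendsto_mahlerCoeff hf)
  have hfin : {ν | ¬ ‖mahlerCoeff f ν‖ ≤ ε / 2}.Finite :=
    eventually_cofinite.1 (hnorm.eventually (ge_mem_nhds (half_pos hε)))
  filter_upwards [eventually_ge_atTop hfin.toFinset] with Φ hΦ x
  rw [dist_eq_norm]
  refine (norm_sub_mahlerPartialSum_le hf (half_pos hε).le (fun ν hν => ?_) x).trans_lt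
    (half_lt_self hε)
  exact not_not.1 fun h => hν (hΦ (hfin.mem_toFinset.2 h))

theorem iSup_norm_mahlerCoeff {n : ℕ} {f : (Fin n → ℤ_[p]) → F} (hf : Continuous f) :
    ⨆ ν, ‖mahlerCoeff f ν‖ = ⨆ x, ‖f x‖ := by
  have hf_le (x) : ‖f x‖ ≤ ⨆ x, ‖f x‖ := le_ciSup (isCompact_range hf.norm).bddAbove x
  have hcoeff_le (ν) : ‖mahlerCoeff f ν‖ ≤ ⨆ x, ‖f x‖ :=
    norm_mahlerCoeff_le (Real.iSup_nonneg fun _ => norm_nonneg _) hf_le ν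
  refine le_antisymm (ciSup_le hcoeff_le) (ciSup_le fun x => ?_)
  have hcoeff_le_iSup (ν) : ‖mahlerCoeff f ν‖ ≤ ⨆ ν, ‖mahlerCoeff f ν‖ :=
    le_ciSup ⟨_, Set.forall_mem_range.2 hcoeff_le⟩ ν
  exact le_of_tendsto ((tendstoUniformly_mahlerPartialSum hf).tendsto_at x).norm
    (.of_forall fun Φ => norm_mahlerPartialSum_le (Real.iSup_nonneg fun _ => norm_nonneg _)
      hcoeff_le_iSup Φ x)

end Normed

theorem mahler_series_of_continuous_general (p : ℕ) [Fact p.Prime] (n : ℕ)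
    (E : Type*) [NormedAddCommGroup E] [NormedSpace ℚ_[p] E] [IsUltrametricDist E]
    (f : (Fin n → ℤ_[p]) → E) (hf : Continuous f)
    (a : (Fin n → ℕ) → E)
    (ha : ∀ ν : Fin n → ℕ,
      a ν = ∑ μ ∈ Finset.Iic ν,
        ((-1 : ℚ_[p]) ^ ((∑ i, ν i) - (∑ i, μ i)) * ∏ i, ((ν i).choose (μ i) : ℚ_[p])) •
          f (fun i => ((μ i : ℤ_[p])))) :
    Tendsto (fun ν : Fin n → ℕ => ‖a ν‖) cofinite (nhds 0) ∧
    TendstoUniformly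
      (fun (Φ : Finset (Fin n → ℕ)) (x : Fin n → ℤ_[p]) =>
        ∑ ν ∈ Φ, (∏ i, ((Ring.choose (x i) (ν i) : ℤ_[p]) : ℚ_[p])) • a ν)
      f atTop ∧
    (⨆ ν : Fin n → ℕ, ‖a ν‖) = ⨆ x : Fin n → ℤ_[p], ‖f x‖ := by
  obtain rfl : a = mahlerCoeff f := funext ha
  exact ⟨tendsto_zero_iff_norm_tendsto_zero.1 (tendsto_mahlerCoeff hf),
    tendstoUniformly_mahlerPartialSum hf, iSup_norm_mahlerCoeff hf⟩

/-- **Mahler coefficients of a continuous function** (Lemma `strongMahcts`, normed case).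
Let `E` be an ultrametric normed `ℚ_p`-vector space and `f : (ℤ_p)^n → E` continuous, with
Mahler coefficients `a_ν = ∑_{μ ≤ ν} (−1)^{|ν|−|μ|} C(ν,μ) • f μ`.  Then `‖a_ν‖ → 0` along
the cofinite filter, the Mahler series converges uniformly to `f`, and
`sup_ν ‖a_ν‖ = sup_x ‖f x‖`. -/
theorem mahler_series_of_continuous (p : ℕ) [Fact p.Prime] (n : ℕ) (hn : 1 ≤ n)
    (E : Type*) [NormedAddCommGroup E] [NormedSpace ℚ_[p] E] [IsUltrametricDist E]
    (f : (Fin n → ℤ_[p]) → E) (hf : Continuous f)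
    (a : (Fin n → ℕ) → E)
    (ha : ∀ ν : Fin n → ℕ,
      a ν = ∑ μ ∈ Finset.Iic ν,
        ((-1 : ℚ_[p]) ^ ((∑ i, ν i) - (∑ i, μ i)) * ∏ i, ((ν i).choose (μ i) : ℚ_[p])) •
          f (fun i => ((μ i : ℤ_[p])))) :
    Tendsto (fun ν : Fin n → ℕ => ‖a ν‖) cofinite (nhds 0) ∧
    TendstoUniformly
      (fun (Φ : Finset (Fin n → ℕ)) (x : Fin n → ℤ_[p]) =>
        ∑ ν ∈ Φ, (∏ i, ((Ring.choose (x i) (ν i) : ℤ_[p]) : ℚ_[p])) • a ν)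
      f atTop ∧
    (⨆ ν : Fin n → ℕ, ‖a ν‖) = ⨆ x : Fin n → ℤ_[p], ‖f x‖ :=
  mahler_series_of_continuous_general p n E f hf a ha
end

section
/- Let X and Y be sets, v : X → (0,∞) and w : Y → (0,∞) be weight functions, E a normed vector space, and f : X × Y → E. Then the function (x,y) ↦ v(x)·w(y)·‖f(x,y)‖ tends to 0 along the cofinite filter on X × Y if and only if the following two conditions hold: (a) for every x ∈ X, the function y ↦ w(y)·‖f(x,y)‖ tends to 0 along the cofinite filter on Y; and (b) the function x ↦ v(x)·sup_{y ∈ Y} w(y)·‖f(x,y)‖ (supremum taken in [0,∞]) tends to 0 along the cofinite filter on X. -/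
open Filter
open scoped ENNReal Topology

/-!
Pass to `ℝ≥0∞`, where `v x * w y * ‖f x y‖` becomes the product `a x * b x y` of
`a x = ofReal (v x) ∈ (0, ∞)` and `b x y = ofReal (w y * ‖f x y‖)`. A function `g` on `X × Y` tends
to `0` cofinitely iff each `{g > ε}` is finite; such a set is finite iff its projection to `X`,
which is `{x | ε < ⨆ y, g (x, y)}`, and each of its fibres `{y | ε < g (x, y)}` are finite.
The factor `a x`, positive and finite, comes out of the supremum and cancels on the fibres.
-/

namespace ENNReal

variable {α X Y : Type*}

theorem tendsto_ofReal_nhds_zero_iff {l : Filter α} {g : α → ℝ} (hg : ∀ s, 0 ≤ g s) :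
    Tendsto (fun s => ENNReal.ofReal (g s)) l (𝓝 0) ↔ Tendsto g l (𝓝 0) := by
  refine ⟨fun h => ?_, fun h => by simpa using ENNReal.tendsto_ofReal h⟩
  simpa [Function.comp_def, toReal_ofReal (hg _)] using (tendsto_toReal zero_ne_top).comp h

theorem tendsto_const_mul_nhds_zero_iff {l : Filter α} {a : ℝ≥0∞} (ha₀ : a ≠ 0) (ha : a ≠ ∞)
    {u : α → ℝ≥0∞} : Tendsto (fun s => a * u s) l (𝓝 0) ↔ Tendsto u l (𝓝 0) := by
  refine ⟨fun h => ?_, fun h => by simpa using ENNReal.Tendsto.const_mul h (Or.inr ha)⟩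
  simpa [ENNReal.inv_mul_cancel_left ha₀ ha] using
    ENNReal.Tendsto.const_mul h (Or.inr (ENNReal.inv_ne_top.2 ha₀))

theorem tendsto_cofinite_nhds_zero_iff {u : α → ℝ≥0∞} :
    Tendsto u cofinite (𝓝 0) ↔ ∀ ε > 0, {s | ε < u s}.Finite := by
  simp only [ENNReal.tendsto_nhds_zero, eventually_cofinite, not_le]

theorem tendsto_cofinite_prod_nhds_zero_iff {g : X × Y → ℝ≥0∞} :
    Tendsto g cofinite (𝓝 0) ↔
      (∀ x, Tendsto (fun y => g (x, y)) cofinite (𝓝 0)) ∧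
        Tendsto (fun x => ⨆ y, g (x, y)) cofinite (𝓝 0) := by
  have proj (ε : ℝ≥0∞) : {x | ε < ⨆ y, g (x, y)} = Prod.fst '' {q | ε < g q} := by
    ext x
    simp [lt_iSup_iff]
  have fibres (ε : ℝ≥0∞) :
      {q | ε < g q} = ⋃ x ∈ {x | ε < ⨆ y, g (x, y)}, Prod.mk x '' {y | ε < g (x, y)} := by
    ext ⟨x, y⟩
    simpa using fun h => lt_of_lt_of_le h (le_iSup (fun y => g (x, y)) y)
  constructor
  · intro h
    refine ⟨fun x => h.comp (Prod.mk_right_injective x).tendsto_cofinite, ?_⟩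
    rw [tendsto_cofinite_nhds_zero_iff] at h ⊢
    exact fun ε hε => proj ε ▸ (h ε hε).image _
  · rintro ⟨hslice, hsup⟩
    simp only [tendsto_cofinite_nhds_zero_iff] at hslice hsup ⊢
    exact fun ε hε => fibres ε ▸ (hsup ε hε).biUnion fun x _ => (hslice x ε hε).image _

end ENNReal

theorem c0_exponential_law_general {X Y : Type*} (E : Type*) [NormedAddCommGroup E]
    (v : X → ℝ) (w : Y → ℝ) (hv : ∀ x, 0 < v x) (hw : ∀ y, 0 < w y)
    (f : X → Y → E) :
    Tendsto (fun q : X × Y => v q.1 * w q.2 * ‖f q.1 q.2‖) cofinite (nhds 0) ↔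
      ((∀ x, Tendsto (fun y => w y * ‖f x y‖) cofinite (nhds 0)) ∧
        Tendsto (fun x => ENNReal.ofReal (v x) * ⨆ y, ENNReal.ofReal (w y * ‖f x y‖))
          cofinite (nhds 0)) := by
  have hwf : ∀ x y, 0 ≤ w y * ‖f x y‖ := fun x y => mul_nonneg (hw y).le (norm_nonneg _)
  have hprod : ∀ q : X × Y, ENNReal.ofReal (v q.1 * w q.2 * ‖f q.1 q.2‖) =
      ENNReal.ofReal (v q.1) * ENNReal.ofReal (w q.2 * ‖f q.1 q.2‖) := fun q => by
    rw [mul_assoc, ENNReal.ofReal_mul (hv _).le]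
  have hslice : ∀ x, Tendsto (fun y => w y * ‖f x y‖) cofinite (𝓝 0) ↔
      Tendsto (fun y => ENNReal.ofReal (v x) * ENNReal.ofReal (w y * ‖f x y‖)) cofinite (𝓝 0) :=
    fun x => by
      rw [ENNReal.tendsto_const_mul_nhds_zero_iff (by simpa using hv x) ENNReal.ofReal_ne_top,
        ENNReal.tendsto_ofReal_nhds_zero_iff (hwf x)]
  rw [← ENNReal.tendsto_ofReal_nhds_zero_iff (g := fun q : X × Y => v q.1 * w q.2 * ‖f q.1 q.2‖)
      fun q => mul_nonneg (mul_nonneg (hv q.1).le (hw q.2).le) (norm_nonneg _),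
    funext hprod, ENNReal.tendsto_cofinite_prod_nhds_zero_iff]
  simp only [hslice, ENNReal.mul_iSup]

/-- **Exponential law for weighted `c₀`-spaces** (Lemma `c0exp`).
For weights `v : X → (0,∞)`, `w : Y → (0,∞)` and a normed vector space `E`, a function
`f : X × Y → E` satisfies `v(x)·w(y)·‖f(x,y)‖ → 0` along the cofinite filter on `X × Y`
iff each slice `y ↦ w(y)·‖f(x,y)‖` tends to `0` along the cofinite filter on `Y` and
`x ↦ v(x)·sup_y w(y)·‖f(x,y)‖` (supremum in `[0,∞]`) tends to `0` along the cofinite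
filter on `X`. -/
theorem c0_exponential_law {X Y : Type*} (E : Type*) [NormedAddCommGroup E]
    [NormedSpace ℝ E]
    (v : X → ℝ) (w : Y → ℝ) (hv : ∀ x, 0 < v x) (hw : ∀ y, 0 < w y)
    (f : X → Y → E) :
    Tendsto (fun q : X × Y => v q.1 * w q.2 * ‖f q.1 q.2‖) cofinite (nhds 0) ↔
      ((∀ x, Tendsto (fun y => w y * ‖f x y‖) cofinite (nhds 0)) ∧
        Tendsto (fun x => ENNReal.ofReal (v x) * ⨆ y, ENNReal.ofReal (w y * ‖f x y‖))
          cofinite (nhds 0)) :=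
  c0_exponential_law_general E v w hv hw f
end

section
/- Let (X,d) be a complete metric space without isolated points (i.e., every point of X is an accumulation point of X). Then every compact subset K of X is contained in a compact subset L of X which has no isolated points (so L is a perfect compact set). -/
/-!
For each `n`, cover `K` by finitely many balls of radius `r n → 0` centred in `K` and put a
nonempty compact perfect set (a Cantor set, which exists because `X` is complete and has no isolated
points) into each of these balls. The union `L` of `K` with all these sets is totally bounded, since
the sets of stage `n` lie within `r n` of `K`; and every point of `L` is an accumulation point of
`L`: a point of a Cantor set within that Cantor set, a point of `K` through the Cantor sets of the
balls containing it. Hence the closure of `L` is compact and perfect.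
-/

open Set Filter Metric Topology

section Topological

variable {α : Type*} [TopologicalSpace α]

theorem preperfect_iUnion {ι : Sort*} {s : ι → Set α} (hs : ∀ i, Preperfect (s i)) :
    Preperfect (⋃ i, s i) := by
  simp only [preperfect_iff_subset_derivedSet] at hs ⊢
  exact iUnion_subset fun i => (hs i).trans (derivedSet_mono _ _ (subset_iUnion s i))

theorem Preperfect.union_of_subset_derivedSet {K U : Set α} (hU : Preperfect U)
    (hK : K ⊆ derivedSet U) : Preperfect (K ∪ U) := by
  rw [preperfect_iff_subset_derivedSet] at hU ⊢
  exact (union_subset hK hU).trans (derivedSet_mono _ _ subset_union_right)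

theorem accPt_of_forall_nhds_inter_nontrivial {x : α} {C : Set α}
    (h : ∀ V ∈ 𝓝 x, (V ∩ C).Nontrivial) : AccPt x (𝓟 C) :=
  accPt_iff_nhds.2 fun V hV => (h V hV).exists_ne x

theorem Preperfect.image {β : Type*} [TopologicalSpace β] {s : Set α} (hs : Preperfect s)
    {f : α → β} (hf : Continuous f) (hinj : Function.Injective f) : Preperfect (f '' s) := by
  rintro _ ⟨x, hx, rfl⟩
  simpa only [map_principal] using (hs x hx).map hf.continuousAt hinj

end Topological

theorem tendsto_update_cofinite {ι : Type*} [DecidableEq ι] {Y : ι → Type*}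
    [∀ i, TopologicalSpace (Y i)] (x y : ∀ i, Y i) :
    Tendsto (fun i => Function.update x i (y i)) cofinite (𝓝 x) := by
  rw [tendsto_pi_nhds]
  intro j
  apply tendsto_nhds_of_eventually_eq
  filter_upwards [eventually_cofinite_ne j] with i hi
  exact Function.update_of_ne hi.symm _ _

instance Pi.perfectSpace {ι : Type*} [Infinite ι] {Y : ι → Type*}
    [∀ i, TopologicalSpace (Y i)] [∀ i, Nontrivial (Y i)] : PerfectSpace (∀ i, Y i) := by
  classical
  rw [perfectSpace_iff_forall_not_isolated]
  intro x
  choose y hy using fun i => exists_ne (x i)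
  have hupdate_ne : ∀ i, Function.update x i (y i) ≠ x := fun i h =>
    hy i (by simpa using congrFun h i)
  exact (tendsto_nhdsWithin_iff.2
    ⟨tendsto_update_cofinite x y, .of_forall hupdate_ne⟩ : Tendsto _ cofinite (𝓝[≠] x)).neBot

namespace Metric

variable {X : Type*} [PseudoMetricSpace X]

theorem totallyBounded_of_forall_subset_thickening {s : Set X}
    (h : ∀ ε > 0, ∃ t, TotallyBounded t ∧ s ⊆ thickening ε t) : TotallyBounded s := by
  rw [totallyBounded_iff]
  intro ε hε
  obtain ⟨t, ht, hst⟩ := h (ε / 2) (half_pos hε)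
  obtain ⟨F, hF, htF⟩ := totallyBounded_iff.1 ht (ε / 2) (half_pos hε)
  refine ⟨F, hF, fun x hx => ?_⟩
  obtain ⟨y, hyt, hxy⟩ := mem_thickening_iff.1 (hst hx)
  obtain ⟨z, hzF, hyz⟩ := mem_iUnion₂.1 (htF hyt)
  refine mem_iUnion₂.2 ⟨z, hzF, ?_⟩
  rw [mem_ball] at hyz ⊢
  linarith [dist_triangle x y z]

theorem totallyBounded_union_iUnion_of_subset_cthickening {K : Set X} {E : ℕ → Set X}
    {δ : ℕ → ℝ} (hK : TotallyBounded K) (hE : ∀ n, TotallyBounded (E n))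
    (hEK : ∀ n, E n ⊆ cthickening (δ n) K) (hδ : Tendsto δ atTop (𝓝 0)) :
    TotallyBounded (K ∪ ⋃ n, E n) := by
  refine totallyBounded_of_forall_subset_thickening fun ε hε => ?_
  obtain ⟨N, hN⟩ := eventually_atTop.1 (hδ.eventually (gt_mem_nhds hε))
  refine ⟨K ∪ ⋃ n ∈ Iio N, E n,
    hK.union ((totallyBounded_biUnion (finite_Iio N)).2 fun n _ => hE n),
    union_subset (subset_union_left.trans (self_subset_thickening hε _))
      (iUnion_subset fun n => ?_)⟩
  rcases lt_or_ge n N with hn | hn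
  · exact fun x hx => self_subset_thickening hε _ (Or.inr (mem_biUnion hn hx))
  · exact (hEK n).trans ((cthickening_subset_thickening' hε (hN n hn) K).trans
      (thickening_subset_of_subset ε subset_union_left))

end Metric

section Complete

variable {X : Type*} [MetricSpace X] [CompleteSpace X]

theorem Perfect.exists_isCompact_perfect_nontrivial_subset {C : Set X} (hC : Perfect C)
    (hne : C.Nonempty) : ∃ D ⊆ C, IsCompact D ∧ Perfect D ∧ D.Nontrivial := by
  obtain ⟨f, hfC, hf, hinj⟩ := hC.exists_nat_bool_injection hne
  have hD : IsCompact (f '' univ) := isCompact_univ.image hf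
  refine ⟨f '' univ, image_univ ▸ hfC, hD, ⟨hD.isClosed, ?_⟩, nontrivial_univ.image hinj⟩
  exact PerfectSpace.univ_preperfect.image hf hinj

variable [PerfectSpace X]

theorem Metric.exists_isCompact_perfect_nontrivial_subset_closedBall (p : X) {ε : ℝ}
    (hε : 0 < ε) : ∃ D ⊆ closedBall p ε, IsCompact D ∧ Perfect D ∧ D.Nontrivial := by
  obtain ⟨D, hD, hDprop⟩ := (isOpen_ball (x := p) (ε := ε)).perfect_closure
    |>.exists_isCompact_perfect_nontrivial_subset (nonempty_ball.2 hε).closure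
  exact ⟨D, hD.trans closure_ball_subset_closedBall, hDprop⟩

theorem IsCompact.exists_totallyBounded_preperfect_superset {K : Set X} (hK : IsCompact K) :
    ∃ L, K ⊆ L ∧ TotallyBounded L ∧ Preperfect L := by
  obtain ⟨r, -, hr, hr0⟩ := exists_seq_strictAnti_tendsto (0 : ℝ)
  choose t htK htfin htcov using fun n => finite_cover_balls_of_compact hK (hr n)
  choose D hDball hDcomp hDperf hDnt using
    fun n (p : X) => exists_isCompact_perfect_nontrivial_subset_closedBall p (hr n)
  set U := ⋃ n, ⋃ p ∈ t n, D n p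
  have hDU : ∀ n, ∀ p ∈ t n, D n p ⊆ U := fun n p hp =>
    subset_iUnion_of_subset n (subset_iUnion₂ (s := fun p _ => D n p) p hp)
  refine ⟨K ∪ U, subset_union_left, ?_, ?_⟩
  · refine totallyBounded_union_iUnion_of_subset_cthickening hK.totallyBounded
      (fun n => ((htfin n).isCompact_biUnion fun p _ => hDcomp n p).totallyBounded)
      (fun n => iUnion₂_subset fun p hp => ?_) hr0
    exact (hDball n p).trans (closedBall_subset_cthickening (htK n hp) _)
  refine (preperfect_iUnion fun n => preperfect_iUnion fun p => preperfect_iUnion fun _ =>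
    (hDperf n p).acc).union_of_subset_derivedSet fun x hx =>
      accPt_of_forall_nhds_inter_nontrivial fun V hV => ?_
  obtain ⟨ε, hε, hεV⟩ := nhds_basis_closedBall.mem_iff.1 hV
  obtain ⟨n, hn⟩ := (hr0.eventually (gt_mem_nhds (half_pos hε))).exists
  obtain ⟨p, hp, hxp⟩ := mem_iUnion₂.1 (htcov n hx)
  have hDx : D n p ⊆ closedBall x ε := by
    refine (hDball n p).trans (closedBall_subset_closedBall' ?_)
    rw [mem_ball'] at hxp
    linarith
  exact (hDnt n p).mono (subset_inter (hDx.trans hεV) (hDU n p hp))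

end Complete

/-- **Perfect hulls of compact sets** (Lemma `justperfect`).
In a complete metric space without isolated points, every compact subset is contained in a
perfect compact subset. -/
theorem compact_subset_perfect_compact {X : Type*} [MetricSpace X] [CompleteSpace X]
    (hX : Preperfect (Set.univ : Set X))
    (K : Set X) (hK : IsCompact K) :
    ∃ L : Set X, K ⊆ L ∧ IsCompact L ∧ Perfect L := by
  have : PerfectSpace X := ⟨hX⟩
  obtain ⟨L, hKL, hLbdd, hLperf⟩ := hK.exists_totallyBounded_preperfect_superset
  exact ⟨closure L, hKL.trans subset_closure, hLbdd.closure.isCompact_of_isClosed isClosed_closure,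
    preperfect_iff_perfect_closure.1 hLperf⟩
end

section
/- Let (K,|·|) be an ultrametric field, n ≥ 1, U ⊆ K^n a compact locally cartesian subset, and 𝒳 a cover of U by relatively open subsets of U. Then there exist m ∈ ℕ and pairwise disjoint clopen cartesian subsets Q₁, …, Q_m of K^n such that, setting W_j = U ∩ Q_j, the sets W₁, …, W_m are pairwise disjoint, compact, cartesian, relatively open in U, their union is U, and each W_j is contained in some member of 𝒳. -/
/-!
In an ultrametric space two closed balls are either nested or disjoint, and a closed ball of
positive radius is clopen. Around each point of `U` choose a closed ball so small that it lies in a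
member of `𝒳` and cuts out of `U` a cartesian set (shrinking a cartesian neighbourhood to a ball
keeps it cartesian, because a ball in `K^n` is a product of balls, which are open in the perfect
space `K`). Finitely many of these balls cover `U`, and the maximal ones among them are pairwise
disjoint and still cover `U`; they are the sets `Q_j`.
-/

/-- A subset of `K^n` is *cartesian* if it is a product `V₁ × ⋯ × Vₙ` of subsets of `K`
none of which has an isolated point. -/
def IsCartesianSet {K : Type*} [TopologicalSpace K] {n : ℕ} (V : Set (Fin n → K)) : Prop :=
  ∃ W : Fin n → Set K, V = Set.univ.pi W ∧ ∀ i, Preperfect (W i)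

/-- A subset of `K^n` is *locally cartesian* if each of its points has a relatively open
neighbourhood in it which is cartesian. -/
def IsLocallyCartesian {K : Type*} [TopologicalSpace K] {n : ℕ} (U : Set (Fin n → K)) : Prop :=
  ∀ x ∈ U, ∃ V : Set (Fin n → K),
    x ∈ V ∧ V ⊆ U ∧ (∃ O, IsOpen O ∧ V = U ∩ O) ∧ IsCartesianSet V

open Metric Set

theorem Finset.exists_pairwiseDisjoint_sUnion_eq {α : Type*} {S : Finset (Set α)}
    (hS : ∀ A ∈ S, ∀ B ∈ S, A ⊆ B ∨ B ⊆ A ∨ Disjoint A B) :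
    ∃ T ⊆ S, (T : Set (Set α)).PairwiseDisjoint id ∧ ⋃₀ (T : Set (Set α)) = ⋃₀ S := by
  classical
  refine ⟨S.filter (Maximal (· ∈ S)), Finset.filter_subset _ _, ?_, ?_⟩
  · intro A hA B hB hAB
    simp only [Finset.coe_filter, mem_ofPred_eq] at hA hB
    rcases hS A hA.1 B hB.1 with h | h | h
    · exact absurd (h.antisymm (hA.2.2 hB.1 h)) hAB
    · exact absurd ((hB.2.2 hA.1 h).antisymm h) hAB
    · exact h
  · refine (sUnion_mono fun A hA => (Finset.mem_filter.1 hA).1).antisymm ?_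
    rintro x ⟨A, hA, hxA⟩
    obtain ⟨B, hAB, hB⟩ := S.exists_le_maximal hA
    exact ⟨B, Finset.mem_filter.2 ⟨hB.1, hB⟩, hAB hxA⟩

theorem IsCompact.exists_pairwise_disjoint_closedBall_cover {X : Type*} [PseudoMetricSpace X]
    [IsUltrametricDist X] {U : Set X} (hU : IsCompact U) (r : X → ℝ) (hr : ∀ x ∈ U, 0 < r x) :
    ∃ (m : ℕ) (c : Fin m → X), (∀ j, c j ∈ U) ∧
      Pairwise (Function.onFun Disjoint fun j => closedBall (c j) (r (c j))) ∧
      U ⊆ ⋃ j, closedBall (c j) (r (c j)) := by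
  obtain ⟨t, htU, htcov⟩ := hU.elim_nhds_subcover (fun x => closedBall x (r x))
    fun x hx => closedBall_mem_nhds x (hr x hx)
  obtain ⟨T, hTS, hTdisj, hTcov⟩ :=
    (t.image fun x => closedBall x (r x)).exists_pairwiseDisjoint_sUnion_eq (by
      simp only [Finset.forall_mem_image]
      exact fun x _ y _ => IsUltrametricDist.closedBall_subset_trichotomy x y _ _)
  have hcentre (B : T) : ∃ x ∈ U, closedBall x (r x) = B := by
    obtain ⟨x, hxt, hxB⟩ := Finset.mem_image.1 (hTS B.2)
    exact ⟨x, htU x hxt, hxB⟩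
  choose c hcU hcB using hcentre
  set e := T.equivFin.symm
  refine ⟨T.card, fun j => c (e j), fun j => hcU (e j), fun j k hjk => ?_, fun x hx => ?_⟩
  · rw [Function.onFun, hcB, hcB]
    exact hTdisj (e j).2 (e k).2 fun h => hjk (e.injective (Subtype.ext h))
  · have hxT : x ∈ ⋃₀ (T : Set (Set X)) := by
      rw [hTcov, Finset.coe_image, sUnion_image]
      exact htcov hx
    obtain ⟨B, hB, hxB⟩ := hxT
    refine mem_iUnion.2 ⟨e.symm ⟨B, hB⟩, ?_⟩
    dsimp only
    rwa [Equiv.apply_symm_apply, hcB]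

section Cartesian

variable {K : Type*} [PseudoMetricSpace K] [IsUltrametricDist K] {n : ℕ}

theorem isCartesianSet_closedBall [PerfectSpace K] (x : Fin n → K) {r : ℝ} (hr : 0 < r) :
    IsCartesianSet (closedBall x r) :=
  ⟨fun i => closedBall (x i) r, closedBall_pi x hr.le,
    fun i => (IsUltrametricDist.isOpen_closedBall (x i) hr.ne').preperfect⟩

theorem IsCartesianSet.inter_closedBall {V : Set (Fin n → K)} (hV : IsCartesianSet V)
    (x : Fin n → K) {r : ℝ} (hr : 0 < r) : IsCartesianSet (V ∩ closedBall x r) := by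
  obtain ⟨W, rfl, hW⟩ := hV
  refine ⟨fun i => closedBall (x i) r ∩ W i, ?_,
    fun i => (hW i).open_inter (IsUltrametricDist.isOpen_closedBall (x i) hr.ne')⟩
  rw [closedBall_pi x hr.le, inter_comm, ← pi_inter_distrib]

theorem IsLocallyCartesian.exists_closedBall_subset {U O : Set (Fin n → K)}
    (hU : IsLocallyCartesian U) {x : Fin n → K} (hx : x ∈ U) (hO : O ∈ nhds x) :
    ∃ r > 0, closedBall x r ⊆ O ∧ IsCartesianSet (U ∩ closedBall x r) := by
  obtain ⟨V, hxV, -, ⟨O', hO', rfl⟩, hV⟩ := hU x hx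
  obtain ⟨r, hr, hrO⟩ : ∃ r > 0, closedBall x r ⊆ O ∩ O' :=
    nhds_basis_closedBall.mem_iff.1 (Filter.inter_mem hO (hO'.mem_nhds hxV.2))
  refine ⟨r, hr, hrO.trans inter_subset_left, ?_⟩
  have hUr : U ∩ closedBall x r = U ∩ O' ∩ closedBall x r := by
    rw [inter_assoc, inter_eq_right.2 (hrO.trans inter_subset_right)]
  exact hUr ▸ hV.inter_closedBall x hr

end Cartesian

theorem compact_locallyCartesian_decomposition_general
    {K : Type*} [NontriviallyNormedField K] [IsUltrametricDist K]
    (n : ℕ) (U : Set (Fin n → K))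
    (hUc : IsCompact U) (hUlc : IsLocallyCartesian U)
    (𝒳 : Set (Set (Fin n → K)))
    (h𝒳o : ∀ X ∈ 𝒳, ∃ O, IsOpen O ∧ X = U ∩ O)
    (h𝒳cov : U ⊆ ⋃₀ 𝒳) :
    ∃ (m : ℕ) (Q : Fin m → Set (Fin n → K)),
      (∀ j, IsClopen (Q j)) ∧ (∀ j, IsCartesianSet (Q j)) ∧
      Pairwise (Function.onFun Disjoint Q) ∧
      Pairwise (Function.onFun Disjoint (fun j => U ∩ Q j)) ∧
      (⋃ j, U ∩ Q j) = U ∧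
      (∀ j, IsCompact (U ∩ Q j)) ∧
      (∀ j, IsCartesianSet (U ∩ Q j)) ∧
      (∀ j, ∃ O, IsOpen O ∧ U ∩ Q j = U ∩ O) ∧
      (∀ j, ∃ X ∈ 𝒳, U ∩ Q j ⊆ X) := by
  have hgood : ∀ x ∈ U, ∃ r > 0,
      IsCartesianSet (U ∩ closedBall x r) ∧ ∃ X ∈ 𝒳, U ∩ closedBall x r ⊆ X := by
    intro x hx
    obtain ⟨X, hX, hxX⟩ := h𝒳cov hx
    obtain ⟨O, hO, rfl⟩ := h𝒳o X hX
    obtain ⟨r, hr, hrO, hcart⟩ := hUlc.exists_closedBall_subset hx (hO.mem_nhds hxX.2)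
    exact ⟨r, hr, hcart, U ∩ O, hX, inter_subset_inter_right U hrO⟩
  choose! r hr hcart hsub using hgood
  obtain ⟨m, c, hcU, hdisj, hcov⟩ := hUc.exists_pairwise_disjoint_closedBall_cover r hr
  have hr0 : ∀ j, r (c j) ≠ 0 := fun j => (hr _ (hcU j)).ne'
  refine ⟨m, fun j => closedBall (c j) (r (c j)),
    fun j => IsUltrametricDist.isClopen_closedBall _ (hr0 j),
    fun j => isCartesianSet_closedBall _ (hr _ (hcU j)), hdisj,
    fun j k hjk => (hdisj hjk).mono inter_subset_right inter_subset_right, ?_,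
    fun j => hUc.inter_right isClosed_closedBall, fun j => hcart _ (hcU j),
    fun j => ⟨_, IsUltrametricDist.isOpen_closedBall _ (hr0 j), rfl⟩, fun j => hsub _ (hcU j)⟩
  rw [← inter_iUnion, inter_eq_left]
  exact hcov

/-- **Decomposition of compact locally cartesian sets** (Lemma `deccompinct`).
Over an ultrametric field, a compact locally cartesian set `U ⊆ K^n` can be decomposed,
subordinate to any relatively open cover `𝒳`, as a finite disjoint union of compact
cartesian relatively open pieces `W_j = U ∩ Q_j` cut out by disjoint clopen cartesian
subsets `Q_j` of `K^n`. -/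
theorem compact_locallyCartesian_decomposition
    {K : Type*} [NontriviallyNormedField K] [IsUltrametricDist K]
    (n : ℕ) (hn : 1 ≤ n) (U : Set (Fin n → K))
    (hUc : IsCompact U) (hUlc : IsLocallyCartesian U)
    (𝒳 : Set (Set (Fin n → K)))
    (h𝒳o : ∀ X ∈ 𝒳, ∃ O, IsOpen O ∧ X = U ∩ O)
    (h𝒳cov : U ⊆ ⋃₀ 𝒳) :
    ∃ (m : ℕ) (Q : Fin m → Set (Fin n → K)),
      (∀ j, IsClopen (Q j)) ∧ (∀ j, IsCartesianSet (Q j)) ∧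
      Pairwise (Function.onFun Disjoint Q) ∧
      Pairwise (Function.onFun Disjoint (fun j => U ∩ Q j)) ∧
      (⋃ j, U ∩ Q j) = U ∧
      (∀ j, IsCompact (U ∩ Q j)) ∧
      (∀ j, IsCartesianSet (U ∩ Q j)) ∧
      (∀ j, ∃ O, IsOpen O ∧ U ∩ Q j = U ∩ O) ∧
      (∀ j, ∃ X ∈ 𝒳, U ∩ Q j ⊆ X) :=
  compact_locallyCartesian_decomposition_general n U hUc hUlc 𝒳 h𝒳o h𝒳cov
end

section
/- Let (K,|·|) be a complete ultrametric field, n ≥ 1, and U ⊆ K^n a locally closed, locally cartesian subset. Then for every x ∈ U and every neighbourhood W of x in U there exists a set V with x ∈ V ⊆ W such that V is relatively open in U, V is cartesian, and V is closed in K^n. -/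
open Filter

/-- A subset `U` of a topological space is *locally closed* if for each `x ∈ U` and each
neighbourhood `W` of `x` in `U` there is a neighbourhood `V ⊆ W` of `x` in `U` which is
closed in the ambient space. -/
def IsLocallyClosedSet {α : Type*} [TopologicalSpace α] (U : Set α) : Prop :=
  ∀ x ∈ U, ∀ W ∈ nhdsWithin x U, W ⊆ U →
    ∃ V ∈ nhdsWithin x U, V ⊆ W ∧ IsClosed V

/-- **Small closed cartesian neighbourhoods** (Lemma `verylast` (a)).
If `K` is a complete ultrametric field and `U ⊆ K^n` is locally closed and locally
cartesian, then every neighbourhood `W` of a point `x` in `U` contains a relatively open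
cartesian neighbourhood `V` of `x` in `U` which is closed in `K^n`. -/
theorem exists_closed_cartesian_nbhd
    {K : Type*} [NontriviallyNormedField K] [IsUltrametricDist K] [CompleteSpace K]
    (n : ℕ) (hn : 1 ≤ n) (U : Set (Fin n → K))
    (hUlc : IsLocallyCartesian U) (hUcl : IsLocallyClosedSet U)
    (x : Fin n → K) (hx : x ∈ U)
    (W : Set (Fin n → K)) (hW : W ∈ nhdsWithin x U) (hWU : W ⊆ U) :
    ∃ V : Set (Fin n → K), x ∈ V ∧ V ⊆ W ∧
      (∃ O, IsOpen O ∧ V = U ∩ O) ∧ IsCartesianSet V ∧ IsClosed V := by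
  obtain ⟨V₀, hxV₀, hV₀U, ⟨O₀, hO₀, hV₀eq⟩, W', hV₀pi, hW'⟩ := hUlc x hx
  -- W ∩ V₀ is a neighbourhood of x in U contained in U
  have hWV₀ : W ∩ V₀ ∈ nhdsWithin x U := by
    refine Filter.inter_mem hW ?_
    rw [hV₀eq]
    exact Filter.inter_mem self_mem_nhdsWithin
      (nhdsWithin_le_nhds (hO₀.mem_nhds (by rw [hV₀eq] at hxV₀; exact hxV₀.2)))
  obtain ⟨V₁, hV₁mem, hV₁sub, hV₁cl⟩ :=
    hUcl x hx (W ∩ V₀) hWV₀ (fun y hy => hWU hy.1)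
  obtain ⟨O₁, hO₁, hxO₁, hO₁sub⟩ := mem_nhdsWithin.mp hV₁mem
  obtain ⟨r, hr, hball⟩ := Metric.isOpen_iff.mp hO₁ x hxO₁
  set ρ : ℝ := r / 2 with hρdef
  have hρpos : 0 < ρ := by positivity
  set B : Set (Fin n → K) := Metric.closedBall x ρ with hBdef
  have hBsub : B ⊆ O₁ := fun y hy =>
    hball (lt_of_le_of_lt (Metric.mem_closedBall.mp hy) (by linarith))
  have hBpi : B = Set.univ.pi fun i => Metric.closedBall (x i) ρ :=
    closedBall_pi x hρpos.le
  have hBopen : IsOpen B := by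
    rw [hBpi]
    exact isOpen_set_pi Set.finite_univ fun i _ =>
      IsUltrametricDist.isOpen_closedBall (x i) hρpos.ne'
  refine ⟨V₀ ∩ B, ⟨hxV₀, Metric.mem_closedBall_self hρpos.le⟩, ?_, ?_, ?_, ?_⟩
  · -- V₀ ∩ B ⊆ W
    intro y hy
    have : y ∈ U ∩ O₁ := ⟨hV₀U hy.1, hBsub hy.2⟩
    exact (hV₁sub (hO₁sub ⟨this.2, this.1⟩)).1
  · exact ⟨O₀ ∩ B, hO₀.inter hBopen, by rw [hV₀eq, Set.inter_assoc]⟩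
  · refine ⟨fun i => W' i ∩ Metric.closedBall (x i) ρ, ?_, fun i => ?_⟩
    · rw [hV₀pi, hBpi, ← Set.pi_inter_distrib]
    · have := (hW' i).open_inter (IsUltrametricDist.isOpen_closedBall (x i) hρpos.ne')
      rwa [Set.inter_comm] at this
  · -- closedness: V₀ ∩ B = V₁ ∩ B
    have hEq : V₀ ∩ B = V₁ ∩ B := by
      apply Set.Subset.antisymm
      · intro y hy
        exact ⟨hO₁sub ⟨hBsub hy.2, hV₀U hy.1⟩, hy.2⟩
      · intro y hy
        exact ⟨(hV₁sub hy.1).2, hy.2⟩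
    rw [hEq]
    exact hV₁cl.inter Metric.isClosed_closedBall
end

section
/- Let (K,|·|) be a complete ultrametric field, n ≥ 1, and V ⊆ K^n a cartesian subset which is closed in K^n. Then every compact subset C of V is contained in a compact cartesian subset L with C ⊆ L ⊆ V. -/
open Metric Set Filter Topology

lemma preperfect_range_cantor {α : Type*} [TopologicalSpace α] [T2Space α]
    {f : (ℕ → Bool) → α} (hf : Continuous f) (hinj : Function.Injective f) :
    Preperfect (Set.range f) := by
  intro y hy
  obtain ⟨a, rfl⟩ := hy
  rw [accPt_iff_nhds]
  intro U hU
  set b : ℕ → (ℕ → Bool) := fun k => Function.update a k (!(a k)) with hb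
  have hbne : ∀ k, b k ≠ a := by
    intro k h
    have h2 : b k k = a k := by rw [h]
    rw [hb] at h2
    simp only [Function.update_self] at h2
    exact (Bool.not_ne_self (a k)) h2
  have htend : Tendsto (fun k => f (b k)) atTop (𝓝 (f a)) := by
    apply (hf.tendsto a).comp
    rw [tendsto_pi_nhds]
    intro j
    apply Tendsto.congr' _ (tendsto_const_nhds (α := ℕ) (x := a j))
    filter_upwards [eventually_gt_atTop j] with k hk
    exact (Function.update_of_ne (Nat.ne_of_lt hk) _ _).symm
  obtain ⟨k, hk⟩ := (htend.eventually_mem hU).exists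
  exact ⟨f (b k), ⟨hk, mem_range_self _⟩, fun h => hbne k (hinj h)⟩

lemma exists_small_compact_preperfect {K : Type*} [NontriviallyNormedField K]
    [IsUltrametricDist K] [CompleteSpace K]
    {W : Set K} (hWc : IsClosed W) (hWp : Preperfect W) {x : K} (hx : x ∈ W)
    {ε : ℝ} (hε : 0 < ε) :
    ∃ P : Set K, P.Nonempty ∧ IsCompact P ∧ Preperfect P ∧ P ⊆ W ∧
      P ⊆ Metric.closedBall x ε := by
  set Q : Set K := Metric.closedBall x ε ∩ W with hQ
  have hQp : Preperfect Q := hWp.open_inter (IsUltrametricDist.isOpen_closedBall x hε.ne')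
  have hQclosed : IsClosed Q := Metric.isClosed_closedBall.inter hWc
  have hQperf : Perfect Q := ⟨hQclosed, hQp⟩
  have hQne : Q.Nonempty := ⟨x, Metric.mem_closedBall_self hε.le, hx⟩
  obtain ⟨f, hfQ, hfc, hfi⟩ := hQperf.exists_nat_bool_injection hQne
  exact ⟨Set.range f, Set.range_nonempty f, isCompact_range hfc,
    preperfect_range_cantor hfc hfi, fun z hz => (hfQ hz).2, fun z hz => (hfQ hz).1⟩

lemma exists_compact_preperfect_hull {K : Type*} [NontriviallyNormedField K]
    [IsUltrametricDist K] [CompleteSpace K]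
    {W : Set K} (hWc : IsClosed W) (hWp : Preperfect W)
    {C : Set K} (hC : IsCompact C) (hCW : C ⊆ W) :
    ∃ L : Set K, C ⊆ L ∧ L ⊆ W ∧ IsCompact L ∧ Preperfect L := by
  choose t ht₁ ht₂ using fun k : ℕ =>
    hC.elim_nhds_subcover (fun x => Metric.ball x ((1/2 : ℝ)^k))
      (fun x _ => Metric.ball_mem_nhds x (by positivity))
  choose P hPne hPcomp hPperf hPW hPball using
    fun (k : ℕ) (x : K) (hx : x ∈ C) =>
      exists_small_compact_preperfect hWc hWp (hCW hx)
        (show (0:ℝ) < (1/2)^k by positivity)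
  set L : Set K := C ∪ ⋃ k : ℕ, ⋃ x ∈ t k, ⋃ (h : x ∈ C), P k x h with hL
  have hPsubL : ∀ k x (hx1 : x ∈ t k) (hx : x ∈ C), P k x hx ⊆ L := by
    intro k x hx1 hx z hz
    exact Or.inr (Set.mem_iUnion.mpr ⟨k, Set.mem_iUnion₂.mpr ⟨x, hx1, Set.mem_iUnion.mpr ⟨hx, hz⟩⟩⟩)
  have hCL : C ⊆ L := Set.subset_union_left
  have hLW : L ⊆ W := by
    rintro z (hz | hz)
    · exact hCW hz
    · obtain ⟨k, hz⟩ := Set.mem_iUnion.mp hz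
      obtain ⟨x, hx1, hz⟩ := Set.mem_iUnion₂.mp hz
      obtain ⟨hx, hz⟩ := Set.mem_iUnion.mp hz
      exact hPW k x hx hz
  -- Preperfect
  have hLperf : Preperfect L := by
    rw [preperfect_iff_nhds]
    rintro z (hz | hz)
    · intro U hU
      obtain ⟨ε, hε, hball⟩ := Metric.mem_nhds_iff.mp hU
      obtain ⟨k, hk⟩ := exists_pow_lt_of_lt_one (half_pos hε) (by norm_num : (1/2 : ℝ) < 1)
      obtain ⟨x, hx1, hzx⟩ := Set.mem_iUnion₂.mp (ht₂ k hz)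
      have hxC : x ∈ C := ht₁ k x hx1
      obtain ⟨y₀, hy₀⟩ := hPne k x hxC
      by_cases hy₀z : y₀ = z
      · -- z ∈ P k x hxC, use its accumulation
        have hacc := hPperf k x hxC z (hy₀z ▸ hy₀)
        rw [accPt_iff_nhds] at hacc
        obtain ⟨y, ⟨hyU, hyP⟩, hyz⟩ := hacc U hU
        exact ⟨y, ⟨hyU, hPsubL k x hx1 hxC hyP⟩, hyz⟩
      · refine ⟨y₀, ⟨hball ?_, hPsubL k x hx1 hxC hy₀⟩, hy₀z⟩
        have h1 : dist y₀ x ≤ (1/2 : ℝ)^k := hPball k x hxC hy₀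
        have h2 : dist z x < (1/2 : ℝ)^k := hzx
        have : dist y₀ z < ε := by
          calc dist y₀ z ≤ dist y₀ x + dist x z := dist_triangle _ _ _
            _ < (1/2:ℝ)^k + (1/2:ℝ)^k := by
                rw [dist_comm x z]; exact add_lt_add_of_le_of_lt h1 h2
            _ < ε/2 + ε/2 := by linarith
            _ = ε := by ring
        exact Metric.mem_ball.mpr this
    · obtain ⟨k, hz⟩ := Set.mem_iUnion.mp hz
      obtain ⟨x, hx1, hz⟩ := Set.mem_iUnion₂.mp hz
      obtain ⟨hx, hz⟩ := Set.mem_iUnion.mp hz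
      intro U hU
      have hacc := hPperf k x hx z hz
      rw [accPt_iff_nhds] at hacc
      obtain ⟨y, ⟨hyU, hyP⟩, hyz⟩ := hacc U hU
      exact ⟨y, ⟨hyU, hPsubL k x hx1 hx hyP⟩, hyz⟩
  -- the finite part
  have hAcomp : ∀ k₀ : ℕ, IsCompact (C ∪ ⋃ k ∈ Finset.range k₀, ⋃ x ∈ t k, ⋃ (h : x ∈ C), P k x h) := by
    intro k₀
    apply hC.union
    apply (Finset.range k₀).finite_toSet.isCompact_biUnion
    intro k _
    apply (t k).finite_toSet.isCompact_biUnion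
    intro x hx1
    by_cases hx : x ∈ C
    · simpa [hx] using hPcomp k x hx
    · simp [hx]
  have hsubL : ∀ k₀ : ℕ, (C ∪ ⋃ k ∈ Finset.range k₀, ⋃ x ∈ t k, ⋃ (h : x ∈ C), P k x h) ⊆ L := by
    rintro k₀ z (hz | hz)
    · exact hCL hz
    · obtain ⟨k, _, hz⟩ := Set.mem_iUnion₂.mp hz
      obtain ⟨x, hx1, hz⟩ := Set.mem_iUnion₂.mp hz
      obtain ⟨hx, hz⟩ := Set.mem_iUnion.mp hz
      exact hPsubL k x hx1 hx hz
  have hLsub : ∀ k₀ : ℕ,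
      L ⊆ (C ∪ ⋃ k ∈ Finset.range k₀, ⋃ x ∈ t k, ⋃ (h : x ∈ C), P k x h) ∪
        ⋃ x ∈ C, Metric.closedBall x ((1/2:ℝ)^k₀) := by
    rintro k₀ z (hz | hz)
    · exact Or.inl (Or.inl hz)
    · obtain ⟨k, hz⟩ := Set.mem_iUnion.mp hz
      obtain ⟨x, hx1, hz⟩ := Set.mem_iUnion₂.mp hz
      obtain ⟨hx, hz⟩ := Set.mem_iUnion.mp hz
      by_cases hk : k < k₀
      · exact Or.inl (Or.inr (Set.mem_iUnion₂.mpr ⟨k, Finset.mem_range.mpr hk,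
          Set.mem_iUnion₂.mpr ⟨x, hx1, Set.mem_iUnion.mpr ⟨hx, hz⟩⟩⟩))
      · push_neg at hk
        refine Or.inr (Set.mem_iUnion₂.mpr ⟨x, hx, Metric.mem_closedBall.mpr ?_⟩)
        calc dist z x ≤ (1/2:ℝ)^k := hPball k x hx hz
          _ ≤ (1/2:ℝ)^k₀ := pow_le_pow_of_le_one (by norm_num) (by norm_num) hk
  have hball_thick : ∀ k₀ : ℕ, (⋃ x ∈ C, Metric.closedBall x ((1/2:ℝ)^k₀)) ⊆
      Metric.cthickening ((1/2:ℝ)^k₀) C := by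
    intro k₀ z hz
    obtain ⟨x, hx, hzx⟩ := Set.mem_iUnion₂.mp hz
    exact Metric.mem_cthickening_of_dist_le z x _ _ hx (Metric.mem_closedBall.mp hzx)
  -- closedness
  have hLclosed : IsClosed L := by
    apply isClosed_of_closure_subset
    intro z hzc
    by_cases hzC : z ∈ C
    · exact hCL hzC
    have : z ∈ Cᶜ := hzC
    obtain ⟨δ, hδ, hballδ⟩ := Metric.isOpen_iff.mp (hC.isClosed.isOpen_compl) z this
    obtain ⟨k₀, hk₀⟩ := exists_pow_lt_of_lt_one (half_pos hδ) (by norm_num : (1/2 : ℝ) < 1)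
    have hclosed2 : IsClosed ((C ∪ ⋃ k ∈ Finset.range k₀, ⋃ x ∈ t k, ⋃ (h : x ∈ C), P k x h) ∪
        Metric.cthickening ((1/2:ℝ)^k₀) C) :=
      (hAcomp k₀).isClosed.union Metric.isClosed_cthickening
    have hz2 := (closure_minimal ((hLsub k₀).trans
      (Set.union_subset_union_right _ (hball_thick k₀))) hclosed2) hzc
    rcases hz2 with hz2 | hz2
    · exact hsubL k₀ hz2
    · exfalso
      have hz3 : z ∈ Metric.thickening δ C :=
        Metric.cthickening_subset_thickening' hδ (by linarith) C hz2
      obtain ⟨y, hyC, hyd⟩ := Metric.mem_thickening_iff.mp hz3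
      exact (hballδ (Metric.mem_ball.mpr (dist_comm z y ▸ hyd))) hyC
  -- total boundedness
  have hLtb : TotallyBounded L := by
    rw [Metric.totallyBounded_iff]
    intro ε hε
    obtain ⟨k₀, hk₀⟩ := exists_pow_lt_of_lt_one (half_pos hε) (by norm_num : (1/2 : ℝ) < 1)
    obtain ⟨s, hsfin, hscov⟩ := Metric.totallyBounded_iff.mp (hAcomp k₀).totallyBounded
      (ε/2) (half_pos hε)
    refine ⟨s, hsfin, ?_⟩
    intro z hz
    rcases hLsub k₀ hz with hz | hz
    · obtain ⟨y, hys, hyz⟩ := Set.mem_iUnion₂.mp (hscov hz)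
      exact Set.mem_iUnion₂.mpr ⟨y, hys, Metric.mem_ball.mpr (lt_of_lt_of_le hyz (by linarith))⟩
    · obtain ⟨x, hxC, hzx⟩ := Set.mem_iUnion₂.mp hz
      have hzx' : dist z x ≤ (1/2:ℝ)^k₀ := Metric.mem_closedBall.mp hzx
      have hxA : x ∈ (C ∪ ⋃ k ∈ Finset.range k₀, ⋃ x ∈ t k, ⋃ (h : x ∈ C), P k x h) :=
        Or.inl hxC
      obtain ⟨y, hys, hyx⟩ := Set.mem_iUnion₂.mp (hscov hxA)
      refine Set.mem_iUnion₂.mpr ⟨y, hys, Metric.mem_ball.mpr ?_⟩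
      calc dist z y ≤ dist z x + dist x y := dist_triangle _ _ _
        _ < (1/2:ℝ)^k₀ + ε/2 := add_lt_add_of_le_of_lt hzx' hyx
        _ < ε/2 + ε/2 := by linarith
        _ = ε := by ring
  exact ⟨L, hCL, hLW, TotallyBounded.isCompact_of_isClosed hLtb hLclosed, hLperf⟩

/-- **Compact cartesian hulls** (Lemma `verylast` (b)).
If `K` is a complete ultrametric field and `V ⊆ K^n` is a cartesian subset which is closed
in `K^n`, then every compact subset `C` of `V` is contained in a compact cartesian subset
`L` with `C ⊆ L ⊆ V`. -/
theorem compact_subset_compact_cartesian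
    {K : Type*} [NontriviallyNormedField K] [IsUltrametricDist K] [CompleteSpace K]
    (n : ℕ) (hn : 1 ≤ n) (V : Set (Fin n → K))
    (hVcart : IsCartesianSet V) (hVcl : IsClosed V)
    (C : Set (Fin n → K)) (hC : IsCompact C) (hCV : C ⊆ V) :
    ∃ L : Set (Fin n → K), C ⊆ L ∧ L ⊆ V ∧ IsCompact L ∧ IsCartesianSet L := by
  obtain ⟨W, hVW, hWp⟩ := hVcart
  rcases C.eq_empty_or_nonempty with rfl | ⟨x₀, hx₀⟩
  · refine ⟨∅, le_rfl, Set.empty_subset _, isCompact_empty,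
      ⟨fun _ => ∅, ?_, fun i z hz => absurd hz (Set.notMem_empty z)⟩⟩
    exact (Set.univ_pi_eq_empty (i := ⟨0, hn⟩) rfl).symm
  have hx₀W : ∀ j, x₀ j ∈ W j := by
    have := hCV hx₀
    rw [hVW] at this
    exact fun j => this j (Set.mem_univ j)
  have hWcl : ∀ i, IsClosed (W i) := by
    intro i
    have heq : W i = (fun t : K => Function.update x₀ i t) ⁻¹' V := by
      ext s
      rw [hVW]
      simp only [Set.mem_preimage, Set.mem_univ_pi]
      constructor
      · intro hs j
        by_cases hj : j = i
        · subst hj; simpa using hs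
        · rw [Function.update_of_ne hj]; exact hx₀W j
      · intro h
        simpa using h i
    rw [heq]
    exact hVcl.preimage (continuous_const.update i continuous_id)
  have hCi : ∀ i, IsCompact ((fun p : Fin n → K => p i) '' C) :=
    fun i => hC.image (continuous_apply i)
  have hCiW : ∀ i, (fun p : Fin n → K => p i) '' C ⊆ W i := by
    rintro i _ ⟨p, hp, rfl⟩
    have := hCV hp
    rw [hVW] at this
    exact this i (Set.mem_univ i)
  choose Li hL1 hL2 hL3 hL4 using fun i =>
    exists_compact_preperfect_hull (hWcl i) (hWp i) (hCi i) (hCiW i)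
  refine ⟨Set.univ.pi Li, ?_, ?_, isCompact_univ_pi hL3, ⟨Li, rfl, hL4⟩⟩
  · intro p hp i _
    exact hL1 i ⟨p, hp, rfl⟩
  · rw [hVW]
    exact Set.pi_mono fun i _ => hL2 i
end

section
/- Let (K,|·|) be an ultrametric field, E a topological K-vector space, n₁, …, n_ℓ ∈ ℕ with n = n₁ + ⋯ + n_ℓ, α ∈ (ℕ₀ ∪ {∞})^ℓ, and U ⊆ K^n a compact locally cartesian subset. Then every function f : U → E which is locally polynomial of multidegree ≤ α extends to a function g : K^n → E which is locally polynomial of multidegree ≤ α, i.e., g|_U = f. -/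
/-- A subset of `K^{n₁} × ⋯ × K^{n_ℓ}` is *cartesian* if it is a product of subsets of `K`
(one for each coordinate) none of which has an isolated point. -/
def IsCartesianSetD {K : Type*} [TopologicalSpace K] {ℓ : ℕ} {nn : Fin ℓ → ℕ}
    (V : Set ((j : Fin ℓ) → Fin (nn j) → K)) : Prop :=
  ∃ W : (j : Fin ℓ) → Fin (nn j) → Set K,
    V = {x | ∀ j i, x j i ∈ W j i} ∧ ∀ j i, Preperfect (W j i)

/-- A subset of `K^{n₁} × ⋯ × K^{n_ℓ}` is *locally cartesian* if each of its points has a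
relatively open neighbourhood in it which is cartesian. -/
def IsLocallyCartesianD {K : Type*} [TopologicalSpace K] {ℓ : ℕ} {nn : Fin ℓ → ℕ}
    (U : Set ((j : Fin ℓ) → Fin (nn j) → K)) : Prop :=
  ∀ x ∈ U, ∃ V : Set ((j : Fin ℓ) → Fin (nn j) → K),
    x ∈ V ∧ V ⊆ U ∧ (∃ O, IsOpen O ∧ V = U ∩ O) ∧ IsCartesianSetD V

/-- `g` is a polynomial function of multidegree `≤ α` on `S ⊆ K^{n₁} × ⋯ × K^{n_ℓ}`:
on `S` it agrees with `x ↦ ∑_β x^β • a_β`, summed over finitely many multi-indices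
`β = (β₁,…,β_ℓ)` with `|β_j| ≤ α_j` for all `j`. -/
def IsPolynomialOfMultidegreeLe {K : Type*} [Field K] {E : Type*} [AddCommGroup E]
    [Module K E] {ℓ : ℕ} {nn : Fin ℓ → ℕ} (α : Fin ℓ → ℕ∞)
    (S : Set ((j : Fin ℓ) → Fin (nn j) → K))
    (g : ((j : Fin ℓ) → Fin (nn j) → K) → E) : Prop :=
  ∃ (Φ : Finset ((j : Fin ℓ) → Fin (nn j) → ℕ))
    (c : ((j : Fin ℓ) → Fin (nn j) → ℕ) → E),
    (∀ β ∈ Φ, ∀ j, ((∑ i, β j i : ℕ) : ℕ∞) ≤ α j) ∧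
    ∀ x ∈ S, g x = ∑ β ∈ Φ, (∏ j, ∏ i, x j i ^ β j i) • c β

/-- `f` is locally polynomial of multidegree `≤ α` on `U`: each point of `U` has a
relatively open neighbourhood in `U` on which `f` agrees with a polynomial function of
multidegree `≤ α`. -/
def IsLocallyPolynomialOfMultidegreeLe {K : Type*} [NormedField K] {E : Type*}
    [AddCommGroup E] [Module K E] {ℓ : ℕ} {nn : Fin ℓ → ℕ} (α : Fin ℓ → ℕ∞)
    (U : Set ((j : Fin ℓ) → Fin (nn j) → K))
    (f : ((j : Fin ℓ) → Fin (nn j) → K) → E) : Prop :=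
  ∀ x ∈ U, ∃ V : Set ((j : Fin ℓ) → Fin (nn j) → K),
    x ∈ V ∧ V ⊆ U ∧ (∃ O, IsOpen O ∧ V = U ∩ O) ∧
    IsPolynomialOfMultidegreeLe α V f

/-!
Balls of an ultrametric space are clopen, so every point of `U` has a clopen neighbourhood on
which `f` agrees with a global polynomial. Compactness leaves finitely many of them, and gluing
the polynomials along these clopen sets one after the other (each time keeping the new polynomial
on its set and the previous function off it) stays locally polynomial, because a point lies
either in the interior of the new set or in the interior of its complement.
-/

open Set

lemma IsUltrametricDist.exists_isClopen_mem_subset {X : Type*} [PseudoMetricSpace X]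
    [IsUltrametricDist X] {O : Set X} {x : X} (hO : IsOpen O) (hx : x ∈ O) :
    ∃ B, IsClopen B ∧ x ∈ B ∧ B ⊆ O := by
  obtain ⟨r, hr, hball⟩ := Metric.isOpen_iff.1 hO x hx
  exact ⟨_, IsUltrametricDist.isClopen_ball x r, Metric.mem_ball_self hr, hball⟩

section

variable {K : Type*} {E : Type*} [AddCommGroup E] {ℓ : ℕ} {nn : Fin ℓ → ℕ} {α : Fin ℓ → ℕ∞}
  {S T : Set ((j : Fin ℓ) → Fin (nn j) → K)} {f g : ((j : Fin ℓ) → Fin (nn j) → K) → E}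

namespace IsPolynomialOfMultidegreeLe

variable [Field K] [Module K E]

lemma mono (hg : IsPolynomialOfMultidegreeLe α S g) (hTS : T ⊆ S) :
    IsPolynomialOfMultidegreeLe α T g :=
  let ⟨Φ, c, hΦ, hgΦ⟩ := hg
  ⟨Φ, c, hΦ, fun x hx => hgΦ x (hTS hx)⟩

lemma congr (hg : IsPolynomialOfMultidegreeLe α S g) (hfg : S.EqOn f g) :
    IsPolynomialOfMultidegreeLe α S f :=
  let ⟨Φ, c, hΦ, hgΦ⟩ := hg
  ⟨Φ, c, hΦ, fun x hx => (hfg hx).trans (hgΦ x hx)⟩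

lemma exists_eqOn_univ (hf : IsPolynomialOfMultidegreeLe α S f) :
    ∃ p, IsPolynomialOfMultidegreeLe α univ p ∧ S.EqOn f p :=
  let ⟨Φ, c, hΦ, hfΦ⟩ := hf
  ⟨fun x => ∑ β ∈ Φ, (∏ j, ∏ i, x j i ^ β j i) • c β, ⟨Φ, c, hΦ, fun _ _ => rfl⟩, hfΦ⟩

lemma zero : IsPolynomialOfMultidegreeLe α S (0 : ((j : Fin ℓ) → Fin (nn j) → K) → E) :=
  ⟨∅, 0, by simp, by simp⟩

end IsPolynomialOfMultidegreeLe

namespace IsLocallyPolynomialOfMultidegreeLe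

variable [NormedField K] [Module K E]

lemma univ_iff : IsLocallyPolynomialOfMultidegreeLe α univ g ↔
    ∀ x, ∃ O, IsOpen O ∧ x ∈ O ∧ IsPolynomialOfMultidegreeLe α O g := by
  constructor
  · intro hg x
    obtain ⟨V, hxV, -, ⟨O, hO, rfl⟩, hgV⟩ := hg x trivial
    rw [univ_inter] at hxV hgV
    exact ⟨O, hO, hxV, hgV⟩
  · intro hg x _
    obtain ⟨O, hO, hxO, hgO⟩ := hg x
    exact ⟨O, hxO, subset_univ O, ⟨O, hO, (univ_inter O).symm⟩, hgO⟩

lemma of_isPolynomialOfMultidegreeLe_univ (hg : IsPolynomialOfMultidegreeLe α univ g) :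
    IsLocallyPolynomialOfMultidegreeLe α univ g :=
  univ_iff.2 fun _ => ⟨univ, isOpen_univ, mem_univ _, hg⟩

lemma piecewise {B : Set ((j : Fin ℓ) → Fin (nn j) → K)} [DecidablePred (· ∈ B)]
    (hB : IsClopen B) (hf : IsLocallyPolynomialOfMultidegreeLe α univ f)
    (hg : IsLocallyPolynomialOfMultidegreeLe α univ g) :
    IsLocallyPolynomialOfMultidegreeLe α univ (B.piecewise f g) := by
  refine univ_iff.2 fun x => ?_
  by_cases hxB : x ∈ B
  · obtain ⟨O, hO, hxO, hfO⟩ := univ_iff.1 hf x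
    exact ⟨O ∩ B, hO.inter hB.isOpen, ⟨hxO, hxB⟩,
      (hfO.mono inter_subset_left).congr fun y hy => B.piecewise_eq_of_mem f g hy.2⟩
  · obtain ⟨O, hO, hxO, hgO⟩ := univ_iff.1 hg x
    exact ⟨O ∩ Bᶜ, hO.inter hB.compl.isOpen, ⟨hxO, hxB⟩,
      (hgO.mono inter_subset_left).congr fun y hy => B.piecewise_eq_of_notMem f g hy.2⟩

lemma exists_glued {ι : Type*} (B : ι → Set ((j : Fin ℓ) → Fin (nn j) → K))
    (p : ι → ((j : Fin ℓ) → Fin (nn j) → K) → E) (t : Finset ι)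
    (hB : ∀ i ∈ t, IsClopen (B i))
    (hp : ∀ i ∈ t, IsLocallyPolynomialOfMultidegreeLe α univ (p i)) :
    ∃ g, IsLocallyPolynomialOfMultidegreeLe α univ g ∧
      ∀ x ∈ ⋃ i ∈ t, B i, ∃ i ∈ t, x ∈ B i ∧ g x = p i x := by
  classical
  induction t using Finset.induction with
  | empty =>
    exact ⟨0, of_isPolynomialOfMultidegreeLe_univ IsPolynomialOfMultidegreeLe.zero, by simp⟩
  | @insert i t _ ih =>
    obtain ⟨g, hg, hgp⟩ := ih (fun j hj => hB j (Finset.mem_insert_of_mem hj))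
      (fun j hj => hp j (Finset.mem_insert_of_mem hj))
    have hi := Finset.mem_insert_self i t
    refine ⟨(B i).piecewise (p i) g, piecewise (hB i hi) (hp i hi) hg, fun x hx => ?_⟩
    by_cases hxB : x ∈ B i
    · exact ⟨i, hi, hxB, (B i).piecewise_eq_of_mem _ _ hxB⟩
    · have hxt : x ∈ ⋃ j ∈ t, B j := by
        simp only [Finset.set_biUnion_insert, mem_union, hxB, false_or] at hx
        exact hx
      obtain ⟨j, hj, hxj, hgx⟩ := hgp x hxt
      exact ⟨j, Finset.mem_insert_of_mem hj, hxj,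
        ((B i).piecewise_eq_of_notMem _ _ hxB).trans hgx⟩

lemma exists_isClopen_eqOn [IsUltrametricDist K] {U : Set ((j : Fin ℓ) → Fin (nn j) → K)}
    (hf : IsLocallyPolynomialOfMultidegreeLe α U f) {x : (j : Fin ℓ) → Fin (nn j) → K}
    (hx : x ∈ U) :
    ∃ B p, IsClopen B ∧ x ∈ B ∧ IsPolynomialOfMultidegreeLe α univ p ∧ (U ∩ B).EqOn f p := by
  obtain ⟨V, hxV, -, ⟨O, hO, rfl⟩, hfV⟩ := hf x hx
  obtain ⟨B, hB, hxB, hBO⟩ := IsUltrametricDist.exists_isClopen_mem_subset hO hxV.2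
  obtain ⟨p, hp, hfp⟩ := hfV.exists_eqOn_univ
  exact ⟨B, p, hB, hxB, hp, hfp.mono (inter_subset_inter_right U hBO)⟩

end IsLocallyPolynomialOfMultidegreeLe

end

theorem locallyPolynomial_extension_general
    {K : Type*} [NontriviallyNormedField K] [IsUltrametricDist K]
    {E : Type*} [AddCommGroup E] [Module K E]
    (ℓ : ℕ) (nn : Fin ℓ → ℕ) (α : Fin ℓ → ℕ∞)
    (U : Set ((j : Fin ℓ) → Fin (nn j) → K))
    (hUc : IsCompact U)
    (f : ((j : Fin ℓ) → Fin (nn j) → K) → E)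
    (hf : IsLocallyPolynomialOfMultidegreeLe α U f) :
    ∃ g : ((j : Fin ℓ) → Fin (nn j) → K) → E,
      IsLocallyPolynomialOfMultidegreeLe α Set.univ g ∧ ∀ x ∈ U, g x = f x := by
  choose! B p hB hxB hp hfp using fun x (hx : x ∈ U) => hf.exists_isClopen_eqOn hx
  obtain ⟨t, htU, hUt⟩ :=
    hUc.elim_nhds_subcover B fun x hx => (hB x hx).isOpen.mem_nhds (hxB x hx)
  obtain ⟨g, hg, hgp⟩ := IsLocallyPolynomialOfMultidegreeLe.exists_glued B p t
    (fun i hi => hB i (htU i hi))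
    (fun i hi => .of_isPolynomialOfMultidegreeLe_univ (hp i (htU i hi)))
  refine ⟨g, hg, fun x hx => ?_⟩
  obtain ⟨i, hi, hxi, hgx⟩ := hgp x (hUt hx)
  exact hgx.trans (hfp i (htU i hi) ⟨hx, hxi⟩).symm

/-- **Extension of locally polynomial functions** (Lemma `extlocp`).
Over an ultrametric field `K`, a function which is locally polynomial of multidegree
`≤ α` on a compact locally cartesian subset `U ⊆ K^{n₁} × ⋯ × K^{n_ℓ}` extends to a
locally polynomial function of multidegree `≤ α` on all of `K^{n₁} × ⋯ × K^{n_ℓ}`. -/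
theorem locallyPolynomial_extension
    {K : Type*} [NontriviallyNormedField K] [IsUltrametricDist K]
    {E : Type*} [AddCommGroup E] [Module K E] [TopologicalSpace E]
    [IsTopologicalAddGroup E] [ContinuousSMul K E]
    (ℓ : ℕ) (hℓ : 1 ≤ ℓ) (nn : Fin ℓ → ℕ) (hnn : ∀ j, 1 ≤ nn j) (α : Fin ℓ → ℕ∞)
    (U : Set ((j : Fin ℓ) → Fin (nn j) → K))
    (hUc : IsCompact U) (hUlc : IsLocallyCartesianD U)
    (f : ((j : Fin ℓ) → Fin (nn j) → K) → E)
    (hf : IsLocallyPolynomialOfMultidegreeLe α U f) :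
    ∃ g : ((j : Fin ℓ) → Fin (nn j) → K) → E,
      IsLocallyPolynomialOfMultidegreeLe α Set.univ g ∧ ∀ x ∈ U, g x = f x :=
  locallyPolynomial_extension_general ℓ nn α U hUc f hf
end

section
/- Let K be a non-discrete Hausdorff topological field, n ≥ 1, and U ⊆ K^n a locally cartesian subset. Then for every x ∈ U and every neighbourhood P of x in U there exists an open cartesian set Q = Q₁ × ⋯ × Qₙ ⊆ K^n (with each Q_i open in K) such that x ∈ U ∩ Q ⊆ P, U ∩ Q is relatively open in U, and U ∩ Q is cartesian, i.e., U ∩ Q is a product of n subsets of K none of which has an isolated point. -/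
/-!
Take a cartesian neighbourhood `V = U ∩ O = W₁ × ⋯ × Wₙ` of `x` and an open `t` with
`U ∩ t ⊆ P`, and shrink to an open box `Q₁ × ⋯ × Qₙ ∋ x` inside `O ∩ t`. Then
`U ∩ Q = V ∩ Q = (W₁ ∩ Q₁) × ⋯ × (Wₙ ∩ Qₙ)`, and a set without isolated points stays so
after intersecting with an open set.
-/

open Set

theorem IsCartesianSet.inter_pi_open {K : Type*} [TopologicalSpace K] {n : ℕ}
    {V : Set (Fin n → K)} (hV : IsCartesianSet V) {Q : Fin n → Set K}
    (hQ : ∀ i, IsOpen (Q i)) : IsCartesianSet (V ∩ univ.pi Q) := by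
  obtain ⟨W, rfl, hW⟩ := hV
  refine ⟨fun i => Q i ∩ W i, ?_, fun i => (hW i).open_inter (hQ i)⟩
  rw [pi_inter_distrib, inter_comm]

theorem exists_open_box_cartesian_nbhd_general
    {K : Type*} [TopologicalSpace K]
    (n : ℕ) (U : Set (Fin n → K)) (hU : IsLocallyCartesian U)
    (x : Fin n → K) (hx : x ∈ U)
    (P : Set (Fin n → K)) (hP : P ∈ nhdsWithin x U) :
    ∃ Q : Fin n → Set K, (∀ i, IsOpen (Q i)) ∧
      x ∈ U ∩ Set.univ.pi Q ∧ U ∩ Set.univ.pi Q ⊆ P ∧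
      (∃ O, IsOpen O ∧ U ∩ Set.univ.pi Q = U ∩ O) ∧
      IsCartesianSet (U ∩ Set.univ.pi Q) := by
  obtain ⟨V, hxV, -, ⟨O, hO, rfl⟩, hV⟩ := hU x hx
  obtain ⟨t, ht, hxt, htP⟩ := mem_nhdsWithin.mp hP
  obtain ⟨Q, hQ, hQOt⟩ := isOpen_pi_iff'.mp (hO.inter ht) x ⟨hxV.2, hxt⟩
  have hQ_open i : IsOpen (Q i) := (hQ i).1
  have hUQ : U ∩ univ.pi Q = U ∩ O ∩ univ.pi Q := by
    rw [inter_assoc, inter_eq_right.mpr (hQOt.trans inter_subset_left)]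
  refine ⟨Q, hQ_open, ⟨hx, fun i _ => (hQ i).2⟩, fun y hy => htP ⟨(hQOt hy.2).2, hy.1⟩,
    ⟨_, isOpen_set_pi finite_univ fun i _ => hQ_open i, rfl⟩, ?_⟩
  rw [hUQ]
  exact hV.inter_pi_open hQ_open

/-- **Cartesian neighbourhoods cut out by open cartesian boxes** (1.3 `nicernbhd`).
If `K` is a non-discrete Hausdorff topological field and `U ⊆ K^n` is locally cartesian,
then for every `x ∈ U` and every neighbourhood `P` of `x` in `U` there is an open
cartesian box `Q = Q₁ × ⋯ × Qₙ` with `x ∈ U ∩ Q ⊆ P` such that `U ∩ Q` is a relatively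
open cartesian subset of `U`. -/
theorem exists_open_box_cartesian_nbhd
    {K : Type*} [Field K] [TopologicalSpace K] [IsTopologicalDivisionRing K] [T2Space K]
    (hK : ¬ DiscreteTopology K)
    (n : ℕ) (hn : 1 ≤ n) (U : Set (Fin n → K)) (hU : IsLocallyCartesian U)
    (x : Fin n → K) (hx : x ∈ U)
    (P : Set (Fin n → K)) (hP : P ∈ nhdsWithin x U) (hPU : P ⊆ U) :
    ∃ Q : Fin n → Set K, (∀ i, IsOpen (Q i)) ∧
      x ∈ U ∩ Set.univ.pi Q ∧ U ∩ Set.univ.pi Q ⊆ P ∧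
      (∃ O, IsOpen O ∧ U ∩ Set.univ.pi Q = U ∩ O) ∧
      IsCartesianSet (U ∩ Set.univ.pi Q) :=
  exists_open_box_cartesian_nbhd_general n U hU x hx P hP
end

section
/- Let p ≥ 3 be a prime. Define V₁ = { ∑_{k=0}^∞ a_k p^k : a ∈ {0,1}^ℕ } ⊆ ℤ_p and W₁ = { ∑_{k=0}^∞ a_k p^k : a ∈ {0,2}^ℕ } ⊆ ℤ_p, where the series are taken in ℤ_p. Then V₁ and W₁ are compact subsets of ℤ_p, neither V₁ nor W₁ has an isolated point, and V₁ ∩ W₁ = {0}. -/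
/-!
The digit expansion `a ↦ ∑ a k * p ^ k` is continuous on `ℕ → ℕ` with the product topology
(the `k`-th term has norm at most `p⁻¹ ^ k`), so it maps the compact sets `{0, 1}^ℕ` and
`{0, 2}^ℕ` onto compact sets. Changing the `n`-th digit moves the sum by a nonzero multiple of
`p ^ n`, which gives points of the image arbitrarily close to any given one. Finally, expansions
with digits below `p` are unique (reduce mod `p`, cancel the first digit and divide by `p`), so a
common point of `V₁` and `W₁` has all its digits in `{0, 1} ∩ {0, 2} = {0}`.
-/

namespace PadicInt

open Filter Topology Set Function

variable {p : ℕ} [Fact p.Prime]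

noncomputable def ofDigits (p : ℕ) [Fact p.Prime] (a : ℕ → ℕ) : ℤ_[p] :=
  ∑' k, (a k : ℤ_[p]) * (p : ℤ_[p]) ^ k

lemma norm_natCast_mul_pow_le (d k : ℕ) : ‖(d : ℤ_[p]) * (p : ℤ_[p]) ^ k‖ ≤ (p : ℝ)⁻¹ ^ k := by
  rw [norm_mul, norm_pow, norm_p]
  exact mul_le_of_le_one_left (by positivity) (norm_le_one _)

lemma summable_inv_prime_pow : Summable fun k : ℕ => (p : ℝ)⁻¹ ^ k :=
  summable_geometric_of_lt_one (by positivity)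
    (inv_lt_one_of_one_lt₀ (mod_cast (Fact.out : p.Prime).one_lt))

lemma summable_ofDigits (a : ℕ → ℕ) : Summable fun k => (a k : ℤ_[p]) * (p : ℤ_[p]) ^ k :=
  .of_norm_bounded summable_inv_prime_pow fun _ => norm_natCast_mul_pow_le _ _

lemma continuous_ofDigits : Continuous (ofDigits p) :=
  continuous_tsum (fun _ => by fun_prop) summable_inv_prime_pow
    fun k a => norm_natCast_mul_pow_le (a k) k

lemma ofDigits_update (a : ℕ → ℕ) (n e : ℕ) :
    ofDigits p (update a n e) = ofDigits p a + ((e : ℤ_[p]) - a n) * (p : ℤ_[p]) ^ n := by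
  have hterms : (fun k => (update a n e k : ℤ_[p]) * (p : ℤ_[p]) ^ k) =
      update (fun k => (a k : ℤ_[p]) * (p : ℤ_[p]) ^ k) n (e * (p : ℤ_[p]) ^ n) := by
    funext k
    rcases eq_or_ne k n with rfl | hk <;> simp [*]
  rw [ofDigits, hterms, ((summable_ofDigits a).hasSum.update n _).tsum_eq, ofDigits]
  ring

lemma ofDigits_eq_add_mul (a : ℕ → ℕ) :
    ofDigits p a = a 0 + p * ofDigits p (fun k => a (k + 1)) := by
  rw [ofDigits, (summable_ofDigits a).tsum_eq_zero_add, ofDigits,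
    ← (summable_ofDigits _).tsum_mul_left]
  simp only [pow_zero, mul_one, pow_succ]
  congr 1
  exact tsum_congr fun k => by ring

lemma toZMod_ofDigits (a : ℕ → ℕ) : toZMod (ofDigits p a) = a 0 := by
  rw [ofDigits_eq_add_mul]
  simp

lemma apply_zero_eq_of_ofDigits_eq {a b : ℕ → ℕ} (ha : a 0 < p) (hb : b 0 < p)
    (h : ofDigits p a = ofDigits p b) : a 0 = b 0 := by
  have hmod := congrArg toZMod h
  rwa [toZMod_ofDigits, toZMod_ofDigits, ZMod.natCast_eq_natCast_iff',
    Nat.mod_eq_of_lt ha, Nat.mod_eq_of_lt hb] at hmod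

lemma ofDigits_tail_eq_of_ofDigits_eq {a b : ℕ → ℕ} (ha : a 0 < p) (hb : b 0 < p)
    (h : ofDigits p a = ofDigits p b) :
    ofDigits p (fun k => a (k + 1)) = ofDigits p (fun k => b (k + 1)) := by
  have h0 := apply_zero_eq_of_ofDigits_eq ha hb h
  rw [ofDigits_eq_add_mul a, ofDigits_eq_add_mul b, h0] at h
  exact mul_left_cancel₀ (Nat.cast_ne_zero.2 (Fact.out : p.Prime).ne_zero) (add_left_cancel h)

lemma ofDigits_injOn : InjOn (ofDigits p) {a | ∀ k, a k < p} := by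
  intro a ha b hb h
  funext k
  induction k generalizing a b with
  | zero => exact apply_zero_eq_of_ofDigits_eq (ha 0) (hb 0) h
  | succ k ih =>
    exact ih (fun j => ha (j + 1)) (fun j => hb (j + 1))
      (ofDigits_tail_eq_of_ofDigits_eq (ha 0) (hb 0) h)

lemma isCompact_ofDigits_image {D : Set ℕ} (hD : D.Finite) :
    IsCompact (ofDigits p '' univ.pi fun _ => D) :=
  (isCompact_univ_pi fun _ => hD.isCompact).image continuous_ofDigits

lemma preperfect_ofDigits_image {D : Set ℕ} (hD : D.Nontrivial) :
    Preperfect (ofDigits p '' univ.pi fun _ => D) := by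
  rintro _ ⟨a, ha, rfl⟩
  choose e heD hne using fun n => hD.exists_ne (a n)
  have hlim : Tendsto (fun n => update a n (e n)) atTop (𝓝 a) := by
    refine tendsto_pi_nhds.2 fun k => tendsto_nhds_of_eventually_eq ?_
    filter_upwards [eventually_gt_atTop k] with n hn
    exact update_of_ne hn.ne _ _
  rw [accPt_iff_frequently]
  refine ((continuous_ofDigits.tendsto a).comp hlim).frequently (.of_forall fun n => ⟨?_, ?_⟩)
  · simp [ofDigits_update, sub_eq_zero, hne n, (Fact.out : p.Prime).ne_zero]
  · refine ⟨_, fun k _ => ?_, rfl⟩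
    rcases eq_or_ne k n with rfl | hk
    · simpa using heD k
    · simpa [hk] using ha k (mem_univ k)

end PadicInt

open PadicInt Set in
/-- **The Cantor-like sets `V₁` and `W₁` in `ℤ_p`** (Example `exa1`).
For a prime `p ≥ 3`, the sets of `p`-adic integers whose digit expansions use only the
digits `{0,1}` (resp. `{0,2}`) are compact, have no isolated points, and intersect
exactly in `{0}`. -/
theorem cantor_sets_in_padic_integers (p : ℕ) [Fact p.Prime] (hp : 3 ≤ p)
    (V₁ W₁ : Set ℤ_[p])
    (hV₁ : V₁ = {x | ∃ a : ℕ → ℕ, (∀ k, a k = 0 ∨ a k = 1) ∧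
      x = ∑' k : ℕ, (a k : ℤ_[p]) * (p : ℤ_[p]) ^ k})
    (hW₁ : W₁ = {x | ∃ a : ℕ → ℕ, (∀ k, a k = 0 ∨ a k = 2) ∧
      x = ∑' k : ℕ, (a k : ℤ_[p]) * (p : ℤ_[p]) ^ k}) :
    IsCompact V₁ ∧ IsCompact W₁ ∧ Preperfect V₁ ∧ Preperfect W₁ ∧
      V₁ ∩ W₁ = {0} := by
  have hV : V₁ = ofDigits p '' univ.pi fun _ => {0, 1} := by
    ext x; simp [hV₁, ofDigits, eq_comm]
  have hW : W₁ = ofDigits p '' univ.pi fun _ => {0, 2} := by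
    ext x; simp [hW₁, ofDigits, eq_comm]
  refine ⟨hV ▸ isCompact_ofDigits_image (toFinite _), hW ▸ isCompact_ofDigits_image (toFinite _),
    hV ▸ preperfect_ofDigits_image (nontrivial_pair zero_ne_one),
    hW ▸ preperfect_ofDigits_image (nontrivial_pair two_ne_zero.symm), ?_⟩
  rw [hV, hW]
  refine Subset.antisymm ?_ ?_
  · rintro _ ⟨⟨a, ha, rfl⟩, b, hb, hab⟩
    simp only [mem_univ_pi, mem_insert_iff, mem_singleton_iff] at ha hb
    obtain rfl : b = a := ofDigits_injOn (fun k => by grind) (fun k => by grind) hab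
    have hb0 : b = 0 := funext fun k => by
      rcases ha k with h | h <;> rcases hb k with h' | h' <;> simp_all
    simp [hb0, ofDigits]
  · rintro _ rfl
    exact ⟨⟨0, by simp, by simp [ofDigits]⟩, 0, by simp, by simp [ofDigits]⟩
end

section
/- Let p ≥ 3 be a prime, V₁ = { ∑_{k=0}^∞ a_k p^k : a ∈ {0,1}^ℕ } and W₁ = { ∑_{k=0}^∞ a_k p^k : a ∈ {0,2}^ℕ }, regarded as subsets of ℚ_p, and let V₂, W₂ ⊆ ℚ_p be disjoint nonempty compact open sets. Set U = (V₁ × V₂) ∪ (W₁ × W₂) ⊆ ℚ_p × ℚ_p. Then there do not exist x, y ∈ ℚ_p, v₂ ∈ V₂ and w₂ ∈ W₂ such that x ≠ y and all four points (x,v₂), (x,w₂), (y,v₂), (y,w₂) belong to U. -/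
/-!
Since `V₂` and `W₂` are disjoint, both `x` and `y` must lie in `V₁ ∩ W₁`. Subtracting a
`{0,1}`-expansion and a `{0,2}`-expansion of the same number gives an expansion of `0` with digits
in `{-2, …, 1}`, all of absolute value `< p` because `p ≥ 3`; such expansions are unique (reduce
mod `p` and shift), so all digits vanish and `V₁ ∩ W₁ = {0}`, whence `x = y = 0`.
-/

open IsUltrametricDist

namespace Padic

variable {p : ℕ} [Fact p.Prime]

lemma inv_prime_lt_one : (p : ℝ)⁻¹ < 1 :=
  inv_lt_one_of_one_lt₀ (by exact_mod_cast (Fact.out : p.Prime).one_lt)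

lemma norm_intCast_mul_pow_le (c : ℤ) (k : ℕ) :
    ‖(c : ℚ_[p]) * (p : ℚ_[p]) ^ k‖ ≤ ((p : ℝ)⁻¹) ^ k := by
  rw [norm_mul, norm_pow, norm_p]
  exact mul_le_of_le_one_left (by positivity) (norm_int_le_one c)

lemma summable_intCast_mul_pow (c : ℕ → ℤ) :
    Summable fun k => (c k : ℚ_[p]) * (p : ℚ_[p]) ^ k :=
  .of_norm_bounded (summable_geometric_of_lt_one (by positivity) inv_prime_lt_one)
    fun k => norm_intCast_mul_pow_le (c k) k

lemma norm_tsum_intCast_mul_pow_le_one (c : ℕ → ℤ) :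
    ‖∑' k, (c k : ℚ_[p]) * (p : ℚ_[p]) ^ k‖ ≤ 1 :=
  norm_tsum_le_of_forall_le fun k => (norm_intCast_mul_pow_le (c k) k).trans
    (pow_le_one₀ (by positivity) inv_prime_lt_one.le)

lemma intCast_eq_zero_of_norm_lt_one {c : ℤ} (hc : |c| < p) (h : ‖(c : ℚ_[p])‖ < 1) : c = 0 :=
  Int.eq_zero_of_abs_lt_dvd (norm_intCast_lt_one_iff.mp h) hc

/-- `∑ c_k p^k = c_0 + p ∑ c_{k+1} p^k`, and the second summand has norm `< 1`, forcing `p ∣ c_0`. -/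
lemma head_eq_zero_and_tsum_tail_eq_zero {c : ℕ → ℤ} (hc : |c 0| < p)
    (h : ∑' k, (c k : ℚ_[p]) * (p : ℚ_[p]) ^ k = 0) :
    c 0 = 0 ∧ ∑' k, (c (k + 1) : ℚ_[p]) * (p : ℚ_[p]) ^ k = 0 := by
  set tail := ∑' k, (c (k + 1) : ℚ_[p]) * (p : ℚ_[p]) ^ k
  have hsplit : (c 0 : ℚ_[p]) + p * tail = 0 := by
    rw [← h, (summable_intCast_mul_pow c).tsum_eq_zero_add, ← tsum_mul_left]
    simp only [pow_zero, mul_one, pow_succ', mul_left_comm]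
  have hp : (p : ℚ_[p]) ≠ 0 := by exact_mod_cast (Fact.out : p.Prime).ne_zero
  have hhead : c 0 = 0 := by
    refine intCast_eq_zero_of_norm_lt_one hc ?_
    rw [eq_neg_of_add_eq_zero_left hsplit, norm_neg, norm_mul, norm_p]
    calc (p : ℝ)⁻¹ * ‖tail‖ ≤ (p : ℝ)⁻¹ * 1 := by
          gcongr; exact norm_tsum_intCast_mul_pow_le_one _
      _ < 1 := by rw [mul_one]; exact inv_prime_lt_one
  refine ⟨hhead, ?_⟩
  rw [hhead, Int.cast_zero, zero_add] at hsplit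
  exact (mul_eq_zero.mp hsplit).resolve_left hp

theorem eq_zero_of_tsum_intCast_mul_pow_eq_zero {c : ℕ → ℤ} (hc : ∀ k, |c k| < p)
    (h : ∑' k, (c k : ℚ_[p]) * (p : ℚ_[p]) ^ k = 0) (n : ℕ) : c n = 0 := by
  induction n generalizing c with
  | zero => exact (head_eq_zero_and_tsum_tail_eq_zero (hc 0) h).1
  | succ n ih => exact ih (fun k => hc (k + 1)) (head_eq_zero_and_tsum_tail_eq_zero (hc 0) h).2

lemma tsum_eq_zero_of_digits_zero_one_eq_digits_zero_two (hp : 3 ≤ p) {a b : ℕ → ℕ}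
    (ha : ∀ k, a k = 0 ∨ a k = 1) (hb : ∀ k, b k = 0 ∨ b k = 2)
    (h : ∑' k, (a k : ℚ_[p]) * (p : ℚ_[p]) ^ k = ∑' k, (b k : ℚ_[p]) * (p : ℚ_[p]) ^ k) :
    ∑' k, (a k : ℚ_[p]) * (p : ℚ_[p]) ^ k = 0 := by
  have hsummable (d : ℕ → ℕ) : Summable fun k => (d k : ℚ_[p]) * (p : ℚ_[p]) ^ k := by
    simpa only [Int.cast_natCast] using summable_intCast_mul_pow (p := p) fun k => (d k : ℤ)
  have hdiff : ∑' k, (((a k : ℤ) - b k : ℤ) : ℚ_[p]) * (p : ℚ_[p]) ^ k = 0 := by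
    simp only [Int.cast_sub, Int.cast_natCast, sub_mul]
    rw [(hsummable a).tsum_sub (hsummable b), h, sub_self]
  have hbound (k : ℕ) : |(a k : ℤ) - b k| < p := by
    rw [abs_lt]; rcases ha k with h | h <;> rcases hb k with h' | h' <;> omega
  have hdigit (k : ℕ) : a k = 0 := by
    have := eq_zero_of_tsum_intCast_mul_pow_eq_zero hbound hdiff k
    rcases ha k with h | h <;> rcases hb k with h' | h' <;> omega
  simp [hdigit]

end Padic

theorem no_distinct_configuration_general (p : ℕ) [Fact p.Prime] (hp : 3 ≤ p)
    (V₁ W₁ : Set ℚ_[p])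
    (hV₁ : V₁ = {x | ∃ a : ℕ → ℕ, (∀ k, a k = 0 ∨ a k = 1) ∧
      x = ∑' k : ℕ, (a k : ℚ_[p]) * (p : ℚ_[p]) ^ k})
    (hW₁ : W₁ = {x | ∃ a : ℕ → ℕ, (∀ k, a k = 0 ∨ a k = 2) ∧
      x = ∑' k : ℕ, (a k : ℚ_[p]) * (p : ℚ_[p]) ^ k})
    (V₂ W₂ : Set ℚ_[p])
    (hdisj : Disjoint V₂ W₂)
    (U : Set (ℚ_[p] × ℚ_[p])) (hU : U = (V₁ ×ˢ V₂) ∪ (W₁ ×ˢ W₂)) :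
    ¬ ∃ (x y v₂ w₂ : ℚ_[p]), v₂ ∈ V₂ ∧ w₂ ∈ W₂ ∧ x ≠ y ∧
        (x, v₂) ∈ U ∧ (x, w₂) ∈ U ∧ (y, v₂) ∈ U ∧ (y, w₂) ∈ U := by
  rintro ⟨x, y, v₂, w₂, hv₂, hw₂, hxy, hxv, hxw, hyv, hyw⟩
  have hv₂W : v₂ ∉ W₂ := hdisj.notMem_of_mem_left hv₂
  have hw₂V : w₂ ∉ V₂ := hdisj.notMem_of_mem_right hw₂
  have hzero {z : ℚ_[p]} (hzv : (z, v₂) ∈ U) (hzw : (z, w₂) ∈ U) : z = 0 := by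
    have hzV : z ∈ V₁ := by simpa [hU, hv₂, hv₂W] using hzv
    have hzW : z ∈ W₁ := by simpa [hU, hw₂, hw₂V] using hzw
    rw [hV₁] at hzV
    rw [hW₁] at hzW
    obtain ⟨a, ha, rfl⟩ := hzV
    obtain ⟨b, hb, hab⟩ := hzW
    exact Padic.tsum_eq_zero_of_digits_zero_one_eq_digits_zero_two hp ha hb hab
  exact hxy ((hzero hxv hxw).trans (hzero hyv hyw).symm)

/-- **Failure of density of configurations with distinct entries** (Example `exa1`).
For a prime `p ≥ 3`, let `V₁, W₁ ⊆ ℚ_p` be the sets of sums `∑ a_k p^k` with digits in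
`{0,1}` resp. `{0,2}`, let `V₂, W₂ ⊆ ℚ_p` be disjoint nonempty compact open sets, and
`U = (V₁ × V₂) ∪ (W₁ × W₂)`.  Then there are no `x ≠ y` in `ℚ_p` and `v₂ ∈ V₂`,
`w₂ ∈ W₂` with all four points `(x,v₂), (x,w₂), (y,v₂), (y,w₂)` in `U`. -/
theorem no_distinct_configuration (p : ℕ) [Fact p.Prime] (hp : 3 ≤ p)
    (V₁ W₁ : Set ℚ_[p])
    (hV₁ : V₁ = {x | ∃ a : ℕ → ℕ, (∀ k, a k = 0 ∨ a k = 1) ∧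
      x = ∑' k : ℕ, (a k : ℚ_[p]) * (p : ℚ_[p]) ^ k})
    (hW₁ : W₁ = {x | ∃ a : ℕ → ℕ, (∀ k, a k = 0 ∨ a k = 2) ∧
      x = ∑' k : ℕ, (a k : ℚ_[p]) * (p : ℚ_[p]) ^ k})
    (V₂ W₂ : Set ℚ_[p])
    (hV₂c : IsCompact V₂) (hV₂o : IsOpen V₂) (hV₂ne : V₂.Nonempty)
    (hW₂c : IsCompact W₂) (hW₂o : IsOpen W₂) (hW₂ne : W₂.Nonempty)
    (hdisj : Disjoint V₂ W₂)
    (U : Set (ℚ_[p] × ℚ_[p])) (hU : U = (V₁ ×ˢ V₂) ∪ (W₁ ×ˢ W₂)) :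
    ¬ ∃ (x y v₂ w₂ : ℚ_[p]), v₂ ∈ V₂ ∧ w₂ ∈ W₂ ∧ x ≠ y ∧
        (x, v₂) ∈ U ∧ (x, w₂) ∈ U ∧ (y, v₂) ∈ U ∧ (y, w₂) ∈ U :=
  no_distinct_configuration_general p hp V₁ W₁ hV₁ hW₁ V₂ W₂ hdisj U hU
end

section
/- Let p ≥ 3 be a prime, V₁ = { ∑_{k=0}^∞ a_k p^k : a ∈ {0,1}^ℕ } and W₁ = { ∑_{k=0}^∞ a_k p^k : a ∈ {0,2}^ℕ }, regarded as subsets of ℚ_p, let V₂, W₂ ⊆ ℚ_p be disjoint nonempty compact open sets, and pick v ∈ V₂ and w ∈ W₂. Set U = (V₁ × V₂) ∪ (W₁ × W₂) ⊆ ℚ_p × ℚ_p. Then the compact set {0} × {v,w} ⊆ U has no open cartesian neighbourhood in U: there do not exist subsets P₁, P₂ ⊆ ℚ_p such that P₁ × P₂ ⊆ U, P₁ × P₂ is relatively open in U, and {(0,v), (0,w)} ⊆ P₁ × P₂. -/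
/-!
Every `x ∈ P₁` pairs with both `v` and `w` inside `U`, and `V₂ ∩ W₂ = ∅`, so `P₁ ⊆ V₁ ∩ W₁`.
Since `p ≥ 3`, the digits `0, 1, 2` are all `< p`, and uniqueness of `p`-adic digit expansions
gives `V₁ ∩ W₁ = {0}`. On the other hand `P₁ × P₂` is relatively open in `U ⊇ V₁ × {v}`, so `P₁`
contains every point of `V₁` close to `0`, in particular `p ^ n ≠ 0` for large `n`.
-/

namespace Padic

noncomputable def ofDigits (p : ℕ) [Fact p.Prime] (a : ℕ → ℕ) : ℚ_[p] :=
  ∑' k, (a k : ℚ_[p]) * (p : ℚ_[p]) ^ k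

variable {p : ℕ} [Fact p.Prime]

theorem summable_natCast_mul_pow (a : ℕ → ℕ) :
    Summable fun k ↦ (a k : ℚ_[p]) * (p : ℚ_[p]) ^ k := by
  refine .of_norm_bounded
    (summable_geometric_of_lt_one (norm_nonneg _) (norm_p_lt_one (p := p))) fun k ↦ ?_
  rw [norm_mul, norm_pow]
  exact mul_le_of_le_one_left (by positivity) (IsUltrametricDist.norm_natCast_le_one ℚ_[p] _)

theorem norm_ofDigits_le_one (a : ℕ → ℕ) : ‖ofDigits p a‖ ≤ 1 :=
  IsUltrametricDist.norm_tsum_le_of_forall_le_of_nonneg zero_le_one fun k ↦ by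
    rw [norm_mul, norm_pow]
    exact mul_le_one₀ (IsUltrametricDist.norm_natCast_le_one ℚ_[p] _) (by positivity)
      (pow_le_one₀ (norm_nonneg _) norm_p_lt_one.le)

theorem ofDigits_eq_add (a : ℕ → ℕ) :
    ofDigits p a = a 0 + p * ofDigits p (fun k ↦ a (k + 1)) := by
  rw [ofDigits, (summable_natCast_mul_pow a).tsum_eq_zero_add, ofDigits, ← tsum_mul_left]
  simp only [pow_zero, mul_one, pow_succ]
  congr 1
  exact tsum_congr fun k ↦ by ring

theorem natCast_eq_natCast_of_norm_sub_lt_one {m n : ℕ} (hm : m < p) (hn : n < p)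
    (h : ‖(m : ℚ_[p]) - n‖ < 1) : m = n := by
  refine Nat.ModEq.eq_of_lt_of_lt ((Nat.modEq_iff_dvd.mpr ?_).symm) hm hn
  rw [← norm_intCast_lt_one_iff]
  simpa using h

theorem ofDigits_head_eq_and_tail_eq {a b : ℕ → ℕ} (ha : ∀ k, a k < p) (hb : ∀ k, b k < p)
    (h : ofDigits p a = ofDigits p b) :
    a 0 = b 0 ∧ ofDigits p (fun k ↦ a (k + 1)) = ofDigits p (fun k ↦ b (k + 1)) := by
  set A := ofDigits p (fun k ↦ a (k + 1))
  set B := ofDigits p (fun k ↦ b (k + 1))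
  rw [ofDigits_eq_add a, ofDigits_eq_add b] at h
  have hdiff : (a 0 : ℚ_[p]) - b 0 = p * (B - A) := by linear_combination h
  have hhead : a 0 = b 0 := by
    refine natCast_eq_natCast_of_norm_sub_lt_one (ha 0) (hb 0) ?_
    have hBA : ‖B - A‖ ≤ 1 := by
      rw [sub_eq_add_neg]
      exact (IsUltrametricDist.norm_add_le_max _ _).trans
        (max_le (norm_ofDigits_le_one _) ((norm_neg A).le.trans (norm_ofDigits_le_one _)))
    rw [hdiff, norm_mul]
    exact mul_lt_one_of_nonneg_of_lt_one_left (norm_nonneg _) norm_p_lt_one hBA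
  refine ⟨hhead, mul_left_cancel₀ (Nat.cast_ne_zero.mpr (Fact.out : p.Prime).ne_zero) ?_⟩
  rw [hhead] at h
  exact add_left_cancel h

theorem eq_of_ofDigits_eq {a b : ℕ → ℕ} (ha : ∀ k, a k < p) (hb : ∀ k, b k < p)
    (h : ofDigits p a = ofDigits p b) : a = b := by
  funext n
  induction n generalizing a b with
  | zero => exact (ofDigits_head_eq_and_tail_eq ha hb h).1
  | succ n ih =>
    exact ih (fun k ↦ ha (k + 1)) (fun k ↦ hb (k + 1)) (ofDigits_head_eq_and_tail_eq ha hb h).2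

theorem ofDigits_single (n : ℕ) : ofDigits p (Pi.single n 1) = (p : ℚ_[p]) ^ n := by
  rw [ofDigits, tsum_eq_single n fun k hk ↦ by simp [hk]]
  simp

theorem ofDigits_eq_zero_of_eq (hp : 3 ≤ p) {a b : ℕ → ℕ} (ha : ∀ k, a k = 0 ∨ a k = 1)
    (hb : ∀ k, b k = 0 ∨ b k = 2) (h : ofDigits p a = ofDigits p b) : ofDigits p a = 0 := by
  have hab := eq_of_ofDigits_eq (fun k ↦ by rcases ha k with h | h <;> omega)
    (fun k ↦ by rcases hb k with h | h <;> omega) h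
  have ha0 : a = 0 := funext fun k ↦ show a k = 0 by
    have := ha k
    have := hab ▸ hb k
    omega
  simp [ofDigits, ha0]

end Padic

open Filter Topology Set

theorem eventually_mem_of_prod_eq_inter_isOpen {X Y : Type*} [TopologicalSpace X]
    [TopologicalSpace Y] {P₁ S : Set X} {P₂ : Set Y} {U O : Set (X × Y)} (hO : IsOpen O)
    (hP : P₁ ×ˢ P₂ = U ∩ O) {x : X} {y : Y} (hxy : (x, y) ∈ P₁ ×ˢ P₂) (hS : S ×ˢ {y} ⊆ U) :
    ∀ᶠ x' in 𝓝[S] x, x' ∈ P₁ := by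
  have hxyO : O ∈ 𝓝 (x, y) := hO.mem_nhds (hP ▸ hxy).2
  have hxO : {x' | (x', y) ∈ O} ∈ 𝓝 x :=
    (Continuous.prodMk_left y).continuousAt.preimage_mem_nhds hxyO
  filter_upwards [nhdsWithin_le_nhds hxO, self_mem_nhdsWithin] with x' hx'O hx'S
  exact (hP ▸ ⟨hS ⟨hx'S, rfl⟩, hx'O⟩ : (x', y) ∈ P₁ ×ˢ P₂).1

theorem no_open_cartesian_neighbourhood_general (p : ℕ) [Fact p.Prime] (hp : 3 ≤ p)
    (V₁ W₁ : Set ℚ_[p])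
    (hV₁ : V₁ = {x | ∃ a : ℕ → ℕ, (∀ k, a k = 0 ∨ a k = 1) ∧
      x = ∑' k : ℕ, (a k : ℚ_[p]) * (p : ℚ_[p]) ^ k})
    (hW₁ : W₁ = {x | ∃ a : ℕ → ℕ, (∀ k, a k = 0 ∨ a k = 2) ∧
      x = ∑' k : ℕ, (a k : ℚ_[p]) * (p : ℚ_[p]) ^ k})
    (V₂ W₂ : Set ℚ_[p])
    (hdisj : Disjoint V₂ W₂) (v w : ℚ_[p]) (hv : v ∈ V₂) (hw : w ∈ W₂)
    (U : Set (ℚ_[p] × ℚ_[p])) (hU : U = (V₁ ×ˢ V₂) ∪ (W₁ ×ˢ W₂)) :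
    ¬ ∃ P₁ P₂ : Set ℚ_[p], P₁ ×ˢ P₂ ⊆ U ∧
        (∃ O : Set (ℚ_[p] × ℚ_[p]), IsOpen O ∧ P₁ ×ˢ P₂ = U ∩ O) ∧
        ((0 : ℚ_[p]), v) ∈ P₁ ×ˢ P₂ ∧ ((0 : ℚ_[p]), w) ∈ P₁ ×ˢ P₂ := by
  rintro ⟨P₁, P₂, hsub, ⟨O, hO, hPO⟩, h0v, h0w⟩
  subst hU
  have hP₁ : P₁ ⊆ V₁ ∩ W₁ := fun x hx ↦
    ⟨((hsub (mk_mem_prod hx h0v.2)).resolve_right fun h ↦ hdisj.notMem_of_mem_left hv h.2).1,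
     ((hsub (mk_mem_prod hx h0w.2)).resolve_left fun h ↦ hdisj.notMem_of_mem_right hw h.2).1⟩
  have hVW : V₁ ∩ W₁ ⊆ {0} := by
    rintro x ⟨hxV, hxW⟩
    obtain ⟨a, ha, rfl⟩ := hV₁ ▸ hxV
    obtain ⟨b, hb, hab⟩ := hW₁ ▸ hxW
    exact Padic.ofDigits_eq_zero_of_eq hp ha hb hab
  have hpow : ∀ n : ℕ, (p : ℚ_[p]) ^ n ∈ V₁ := fun n ↦ hV₁ ▸
    ⟨Pi.single n 1, fun k ↦ by by_cases h : k = n <;> simp [h], (Padic.ofDigits_single n).symm⟩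
  have hlim : Tendsto (fun n ↦ (p : ℚ_[p]) ^ n) atTop (𝓝[V₁] 0) :=
    tendsto_nhdsWithin_iff.mpr ⟨tendsto_pow_atTop_nhds_zero_of_norm_lt_one Padic.norm_p_lt_one,
      Eventually.of_forall hpow⟩
  obtain ⟨n, hn⟩ := (hlim.eventually (eventually_mem_of_prod_eq_inter_isOpen hO hPO h0v
    ((prod_mono_right (singleton_subset_iff.mpr hv)).trans subset_union_left))).exists
  exact pow_ne_zero n (Nat.cast_ne_zero.mpr (Fact.out : p.Prime).ne_zero) (hVW (hP₁ hn))

/-- **A compact product set without open cartesian neighbourhood** (Example after 3.16).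
For a prime `p ≥ 3`, let `V₁, W₁ ⊆ ℚ_p` be the sets of sums `∑ a_k p^k` with digits in
`{0,1}` resp. `{0,2}`, let `V₂, W₂ ⊆ ℚ_p` be disjoint nonempty compact open sets, pick
`v ∈ V₂`, `w ∈ W₂`, and set `U = (V₁ × V₂) ∪ (W₁ × W₂)`.  Then the compact set
`{0} × {v,w}` has no relatively open product neighbourhood `P₁ × P₂ ⊆ U` in `U`. -/
theorem no_open_cartesian_neighbourhood (p : ℕ) [Fact p.Prime] (hp : 3 ≤ p)
    (V₁ W₁ : Set ℚ_[p])
    (hV₁ : V₁ = {x | ∃ a : ℕ → ℕ, (∀ k, a k = 0 ∨ a k = 1) ∧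
      x = ∑' k : ℕ, (a k : ℚ_[p]) * (p : ℚ_[p]) ^ k})
    (hW₁ : W₁ = {x | ∃ a : ℕ → ℕ, (∀ k, a k = 0 ∨ a k = 2) ∧
      x = ∑' k : ℕ, (a k : ℚ_[p]) * (p : ℚ_[p]) ^ k})
    (V₂ W₂ : Set ℚ_[p])
    (hV₂c : IsCompact V₂) (hV₂o : IsOpen V₂) (hV₂ne : V₂.Nonempty)
    (hW₂c : IsCompact W₂) (hW₂o : IsOpen W₂) (hW₂ne : W₂.Nonempty)
    (hdisj : Disjoint V₂ W₂) (v w : ℚ_[p]) (hv : v ∈ V₂) (hw : w ∈ W₂)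
    (U : Set (ℚ_[p] × ℚ_[p])) (hU : U = (V₁ ×ˢ V₂) ∪ (W₁ ×ˢ W₂)) :
    ¬ ∃ P₁ P₂ : Set ℚ_[p], P₁ ×ˢ P₂ ⊆ U ∧
        (∃ O : Set (ℚ_[p] × ℚ_[p]), IsOpen O ∧ P₁ ×ˢ P₂ = U ∩ O) ∧
        ((0 : ℚ_[p]), v) ∈ P₁ ×ˢ P₂ ∧ ((0 : ℚ_[p]), w) ∈ P₁ ×ˢ P₂ :=
  no_open_cartesian_neighbourhood_general p hp V₁ W₁ hV₁ hW₁ V₂ W₂ hdisj v w hv hw U hU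
end

section
/- Let K be a field, E a K-vector space, n ≥ 1, U ⊆ K^n a subset, f : U → E a function, β ∈ ℕ₀^n, i ∈ {1,…,n}, and π a permutation of {0,1,…,β_i}. Then for each x ∈ U^{>β<}, the tuple x' obtained from x by replacing the i-th block (x^{(i)}_0, …, x^{(i)}_{β_i}) with (x^{(i)}_{π(0)}, …, x^{(i)}_{π(β_i)}) again lies in U^{>β<}, and f^{>β<}(x') = f^{>β<}(x). -/
/-- `x ∈ U^{<β>}`: every selection of one entry from each block lies in `U`. -/
def MemExt {K : Type*} {n : ℕ} (U : Set (Fin n → K)) (β : Fin n → ℕ)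
    (x : (i : Fin n) → Fin (β i + 1) → K) : Prop :=
  ∀ j : (i : Fin n) → Fin (β i + 1), (fun i => x i (j i)) ∈ U

/-- `x ∈ U^{>β<}`: moreover, within each block the entries are pairwise distinct. -/
def MemExtDistinct {K : Type*} {n : ℕ} (U : Set (Fin n → K)) (β : Fin n → ℕ)
    (x : (i : Fin n) → Fin (β i + 1) → K) : Prop :=
  MemExt U β x ∧ ∀ i, Function.Injective (x i)

/-- The iterated partial difference quotient map `f^{>β<}`,
`f^{>β<}(x) = ∑_j (∏_i ∏_{k ≠ j_i} (x^{(i)}_{j_i} − x^{(i)}_k)⁻¹) • f(x^{(1)}_{j_1}, …, x^{(n)}_{j_n})`. -/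
noncomputable def diffQuot {K : Type*} [Field K] {E : Type*} [AddCommGroup E] [Module K E]
    {n : ℕ} (f : (Fin n → K) → E) (β : Fin n → ℕ)
    (x : (i : Fin n) → Fin (β i + 1) → K) : E :=
  ∑ j : (i : Fin n) → Fin (β i + 1),
    (∏ i, ∏ k ∈ Finset.univ.erase (j i), (x i (j i) - x i k)⁻¹) • f (fun i => x i (j i))

/-- **Symmetry of the difference quotient maps** (Lemma `presymm`).
Permuting the entries of the `i`-th block of `x ∈ U^{>β<}` yields again a point of
`U^{>β<}`, and leaves `f^{>β<}` unchanged. -/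
theorem diffQuot_perm_invariant {K : Type*} [Field K] {E : Type*} [AddCommGroup E]
    [Module K E] (n : ℕ) (hn : 1 ≤ n) (U : Set (Fin n → K)) (f : (Fin n → K) → E)
    (β : Fin n → ℕ) (i : Fin n) (π : Equiv.Perm (Fin (β i + 1)))
    (x : (i' : Fin n) → Fin (β i' + 1) → K) (hx : MemExtDistinct U β x) :
    MemExtDistinct U β (Function.update x i (x i ∘ π)) ∧
      diffQuot f β (Function.update x i (x i ∘ π)) = diffQuot f β x := by

  classical
  -- the permutation on index tuples acting by `π` at coordinate `i`
  set σ : Equiv.Perm ((i' : Fin n) → Fin (β i' + 1)) :=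
    { toFun := fun j => Function.update j i (π (j i))
      invFun := fun j => Function.update j i (π⁻¹ (j i))
      left_inv := by
        intro j; funext i'
        by_cases h : i' = i
        · subst h; simp
        · simp [Function.update_of_ne h]
      right_inv := by
        intro j; funext i'
        by_cases h : i' = i
        · subst h; simp
        · simp [Function.update_of_ne h] } with hσ
  have hval : ∀ (j : (i' : Fin n) → Fin (β i' + 1)) (i' : Fin n),
      Function.update x i (x i ∘ π) i' (j i') = x i' (σ j i') := by
    intro j i'
    by_cases h : i' = i
    · subst h; simp [hσ]
    · simp [hσ, Function.update_of_ne h]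
  constructor
  · constructor
    · intro j
      have := hx.1 (σ j)
      have hfun : (fun i' => Function.update x i (x i ∘ π) i' (j i'))
          = fun i' => x i' (σ j i') := by
        funext i'; exact hval j i'
      rw [hfun]; exact this
    · intro i'
      by_cases h : i' = i
      · subst h
        simp only [Function.update_self]
        exact (hx.2 _).comp π.injective
      · rw [Function.update_of_ne h]
        exact hx.2 i'
  · unfold diffQuot
    refine Fintype.sum_equiv σ _ _ ?_
    intro j
    have hfun : (fun i' => Function.update x i (x i ∘ π) i' (j i'))
        = fun i' => x i' (σ j i') := by
      funext i'; exact hval j i'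
    rw [hfun]
    congr 1
    refine Finset.prod_congr rfl ?_
    intro i' _
    by_cases h : i' = i
    · subst h
      simp only [hσ, Equiv.coe_fn_mk, Function.update_self, Function.comp_apply]
      refine Finset.prod_nbij' (fun k => π k) (fun k => π⁻¹ k) ?_ ?_ ?_ ?_ ?_
      · intro k hk
        simp only [Finset.mem_erase, Finset.mem_univ, and_true] at hk ⊢
        exact fun hc => hk (π.injective hc)
      · intro k hk
        simp only [Finset.mem_erase, Finset.mem_univ, and_true] at hk ⊢
        intro hc; rw [← hc] at hk; simp at hk
      · intro k _; simp
      · intro k _; simp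
      · intro k _; rfl
    · have h1 : Function.update x i (x i ∘ π) i' = x i' := Function.update_of_ne h _ _
      have h2 : σ j i' = j i' := by simp [hσ, Function.update_of_ne h]
      rw [h1, h2]
end

section
/- Let X and Y be Hausdorff topological spaces and (X_j)_{j ∈ J} a family of subsets of X whose interiors cover X. Then the restriction map ρ : C(X,Y) → ∏_{j ∈ J} C(X_j,Y), γ ↦ (γ|_{X_j})_{j ∈ J}, is a topological embedding with closed image, where all function spaces carry the compact-open topology and the product carries the product topology. -/
/-!
Since the interiors of the `X_j` cover a compact `K ⊆ X`, `K` is a finite union of compact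
pieces `K_i ⊆ X_i` (splitting a compact set along a finite open cover needs `X` to be R₁). Hence
`⌊K, U⌋ = ⋂ᵢ ⌊K_i, U⌋` is open for the topology induced by the restrictions, which is therefore
the compact-open topology. A family in the image is compatible on overlaps, and conversely a
compatible family glues to a continuous map because the `X_j` are neighbourhoods covering `X`;
compatibility is a family of equations between point evaluations, a closed condition as `Y` is
Hausdorff.
-/

open Topology

namespace ContinuousMap

variable {X Y ι : Type*} [TopologicalSpace X] [TopologicalSpace Y]

theorem isOpen_induced_restrict_setOf_mapsTo {s K : Set X} {U : Set Y} (hKs : K ⊆ s)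
    (hK : IsCompact K) (hU : IsOpen U) :
    IsOpen[.induced (restrict s) compactOpen] {γ : C(X, Y) | Set.MapsTo γ K U} := by
  have hK' : IsCompact (Subtype.val ⁻¹' K : Set s) := by
    rwa [Subtype.isCompact_iff, Subtype.image_preimage_coe, Set.inter_eq_right.mpr hKs]
  refine ⟨_, isOpen_setOfPred_mapsTo hK' hU, Set.ext fun γ => ?_⟩
  exact ⟨fun h x hx => h (x := ⟨x, hKs hx⟩) hx, fun h x hx => h hx⟩

theorem compactOpen_eq_iInf_induced_of_nhds_cover [R1Space X] (S : ι → Set X)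
    (hS : ∀ x, ∃ i, S i ∈ 𝓝 x) :
    (compactOpen : TopologicalSpace C(X, Y)) =
      ⨅ i, .induced (restrict (S i)) compactOpen := by
  refine le_antisymm (le_iInf fun i => compactOpen_le_induced (S i)) ?_
  rw [compactOpen_eq]
  refine le_generateFrom ?_
  rintro _ ⟨K, hK, U, hU, rfl⟩
  obtain ⟨t, hKt⟩ := hK.elim_finite_subcover (fun i => interior (S i))
    (fun _ => isOpen_interior) fun x _ => Set.mem_iUnion.2 <| (hS x).imp fun _ =>
      mem_interior_iff_mem_nhds.2
  obtain ⟨L, hL, hLS, rfl⟩ :=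
    hK.finite_compact_cover t _ (fun _ _ => isOpen_interior) hKt
  simp only [Set.mapsTo_iUnion, Set.ofPred_forall]
  refine @isOpen_biInter_finset _ _ (⨅ i, .induced (restrict (S i)) compactOpen) _ _ fun i _ => ?_
  exact TopologicalSpace.le_def.1 (iInf_le _ i) _ <|
    isOpen_induced_restrict_setOf_mapsTo ((hLS i).trans interior_subset) (hL i) hU

theorem isInducing_pi_restrict_of_nhds_cover [R1Space X] (S : ι → Set X)
    (hS : ∀ x, ∃ i, S i ∈ 𝓝 x) :
    IsInducing fun (γ : C(X, Y)) i => γ.restrict (S i) :=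
  ⟨(compactOpen_eq_iInf_induced_of_nhds_cover S hS).trans (induced_to_pi _).symm⟩

theorem pi_restrict_injective_of_cover (S : ι → Set X) (hS : ∀ x, ∃ i, x ∈ S i) :
    Function.Injective fun (γ : C(X, Y)) i => γ.restrict (S i) := by
  intro γ₁ γ₂ h
  ext x
  obtain ⟨i, hi⟩ := hS x
  exact ContinuousMap.congr_fun (congr_fun h i) ⟨x, hi⟩

theorem range_pi_restrict_of_nhds_cover (S : ι → Set X) (hS : ∀ x, ∃ i, S i ∈ 𝓝 x) :
    Set.range (fun (γ : C(X, Y)) i => γ.restrict (S i)) =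
      {φ | ∀ i j (x : X) (hi : x ∈ S i) (hj : x ∈ S j), φ i ⟨x, hi⟩ = φ j ⟨x, hj⟩} := by
  refine Set.Subset.antisymm ?_ fun φ hφ =>
    ⟨liftCover S φ hφ hS, funext fun _ => liftCover_restrict⟩
  rintro _ ⟨γ, rfl⟩ i j x hi hj
  rfl

theorem isClosed_setOf_restrict_compatible [T2Space Y] (S : ι → Set X) :
    IsClosed {φ : ∀ i, C(S i, Y) |
      ∀ i j (x : X) (hi : x ∈ S i) (hj : x ∈ S j), φ i ⟨x, hi⟩ = φ j ⟨x, hj⟩} := by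
  simp only [Set.ofPred_forall]
  refine isClosed_iInter fun i => isClosed_iInter fun j => isClosed_iInter fun x =>
    isClosed_iInter fun hi => isClosed_iInter fun hj => isClosed_eq ?_ ?_ <;>
  exact (continuous_eval_const _).comp (continuous_apply _)

end ContinuousMap

/-- **Gluing lemma for the compact-open topology** (Lemma `coveremb`).
Let `X`, `Y` be Hausdorff spaces and `(X_j)` a family of subsets of `X` whose interiors
cover `X`.  Then the restriction map `C(X,Y) → ∏_j C(X_j,Y)` is a topological embedding
with closed image (compact-open topologies throughout). -/
theorem restriction_isEmbedding_isClosed_range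
    {X Y : Type*} [TopologicalSpace X] [TopologicalSpace Y] [T2Space X] [T2Space Y]
    {J : Type*} (Xs : J → Set X) (hcov : ∀ x : X, ∃ j, x ∈ interior (Xs j)) :
    IsEmbedding (fun (γ : C(X, Y)) (j : J) => γ.restrict (Xs j)) ∧
      IsClosed (Set.range (fun (γ : C(X, Y)) (j : J) => γ.restrict (Xs j))) := by
  have hnhds : ∀ x, ∃ j, Xs j ∈ 𝓝 x :=
    fun x => (hcov x).imp fun _ => mem_interior_iff_mem_nhds.1
  refine ⟨⟨ContinuousMap.isInducing_pi_restrict_of_nhds_cover Xs hnhds, ?_⟩, ?_⟩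
  · exact ContinuousMap.pi_restrict_injective_of_cover Xs
      fun x => (hnhds x).imp fun _ => mem_of_mem_nhds
  · rw [ContinuousMap.range_pi_restrict_of_nhds_cover Xs hnhds]
    exact ContinuousMap.isClosed_setOf_restrict_compatible Xs
end

section
/- Let K be a non-discrete Hausdorff topological field, n ≥ 1, and U ⊆ K^n a locally cartesian subset which is locally compact and σ-compact. Then U admits a countable cover by relatively open cartesian subsets V ⊆ U each of which is σ-compact. -/
/-- Inside a compact set `T` in a Hausdorff space, every point has, within any prescribed
open set `B`, a relatively open neighbourhood which is a countable monotone union of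
compact sets (a cozero set, via Urysohn's lemma). -/
private lemma urysohn_trace {K : Type*} [TopologicalSpace K] [T2Space K]
    {T B : Set K} (hT : IsCompact T) (hB : IsOpen B) {x : K} (hxT : x ∈ T) (hxB : x ∈ B) :
    ∃ (Θ : Set K) (D : ℕ → Set K), IsOpen Θ ∧ x ∈ Θ ∧ Monotone D ∧
      (∀ m, IsCompact (D m)) ∧ T ∩ Θ ⊆ B ∧ T ∩ Θ = ⋃ m, D m := by
  haveI : CompactSpace ↥T := isCompact_iff_compactSpace.mp hT
  set x₀ : ↥T := ⟨x, hxT⟩ with hx₀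
  have hscl : IsClosed ((Subtype.val ⁻¹' B : Set ↥T)ᶜ) :=
    (hB.preimage continuous_subtype_val).isClosed_compl
  have htcl : IsClosed ({x₀} : Set ↥T) := isClosed_singleton
  have hdisj : Disjoint ((Subtype.val ⁻¹' B : Set ↥T)ᶜ) ({x₀} : Set ↥T) :=
    Set.disjoint_singleton_right.mpr (not_not.mpr hxB)
  obtain ⟨f, hf0, hf1, hf01⟩ := exists_continuous_zero_one_of_isClosed hscl htcl hdisj
  set G : Set ↥T := {y | 0 < f y} with hG
  have hGopen : IsOpen G := isOpen_lt continuous_const f.continuous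
  obtain ⟨Θ, hΘopen, hΘpre⟩ := isOpen_induced_iff.mp hGopen
  have hx₀G : x₀ ∈ G := by
    have h1 : f x₀ = 1 := hf1 (Set.mem_singleton x₀)
    simp only [hG, Set.mem_setOf_eq, h1]
    norm_num
  have hTΘ : T ∩ Θ = Subtype.val '' G := by
    rw [← Subtype.image_preimage_coe T Θ, hΘpre]
  refine ⟨Θ, fun m => Subtype.val '' {y : ↥T | 1 / ((m : ℝ) + 1) ≤ f y}, hΘopen, ?_, ?_, ?_, ?_, ?_⟩
  · -- x ∈ Θ
    have : x₀ ∈ Subtype.val ⁻¹' Θ := by rw [hΘpre]; exact hx₀G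
    exact this
  · -- monotone
    intro a b hab
    apply Set.image_mono
    intro y hy
    have hc : ((a : ℝ) + 1) ≤ ((b : ℝ) + 1) := by
      have : (a : ℝ) ≤ (b : ℝ) := by exact_mod_cast hab
      linarith
    have : 1 / ((b : ℝ) + 1) ≤ 1 / ((a : ℝ) + 1) :=
      one_div_le_one_div_of_le (by positivity) hc
    exact le_trans this hy
  · -- compactness
    intro m
    have hcl : IsClosed {y : ↥T | 1 / ((m : ℝ) + 1) ≤ f y} :=
      isClosed_le continuous_const f.continuous
    exact (hcl.isCompact).image continuous_subtype_val
  · -- T ∩ Θ ⊆ B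
    rw [hTΘ]
    rintro y ⟨z, hzG, rfl⟩
    by_contra hyB
    have hz : z ∈ (Subtype.val ⁻¹' B : Set ↥T)ᶜ := hyB
    have : f z = 0 := hf0 hz
    rw [hG] at hzG
    simp only [Set.mem_setOf_eq, this] at hzG
    exact lt_irrefl _ hzG
  · -- T ∩ Θ = ⋃ m, D m
    rw [hTΘ]
    have hGU : G = ⋃ m : ℕ, {y : ↥T | 1 / ((m : ℝ) + 1) ≤ f y} := by
      ext y
      simp only [hG, Set.mem_setOf_eq, Set.mem_iUnion]
      constructor
      · intro hy
        obtain ⟨m, hm⟩ := exists_nat_one_div_lt hy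
        exact ⟨m, hm.le⟩
      · rintro ⟨m, hm⟩
        exact lt_of_lt_of_le (by positivity) hm
    rw [hGU, Set.image_iUnion]

/-- A product of countable monotone unions of compact sets is σ-compact. -/
private lemma sigmaCompact_pi {K : Type*} [TopologicalSpace K] {n : ℕ}
    {S : Fin n → Set K} (D : Fin n → ℕ → Set K) (hD : ∀ i, Monotone (D i))
    (hDc : ∀ i m, IsCompact (D i m)) (hS : ∀ i, S i = ⋃ m, D i m) :
    IsSigmaCompact (Set.univ.pi S) := by
  refine ⟨fun m => Set.univ.pi (fun i => D i m),
    fun m => isCompact_univ_pi (fun i => hDc i m), ?_⟩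
  ext g
  simp only [Set.mem_iUnion, Set.mem_univ_pi]
  constructor
  · rintro ⟨m, hm⟩ i
    rw [hS i]
    exact Set.mem_iUnion.mpr ⟨m, hm i⟩
  · intro hg
    have hex : ∀ i, ∃ m, g i ∈ D i m := by
      intro i
      have := hg i
      rw [hS i] at this
      exact Set.mem_iUnion.mp this
    choose φ hφ using hex
    exact ⟨Finset.univ.sup φ, fun i => hD i (Finset.le_sup (Finset.mem_univ i)) (hφ i)⟩

private lemma pointwise_piece {K : Type*} [Field K] [TopologicalSpace K]
    [IsTopologicalDivisionRing K] [T2Space K]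
    {n : ℕ} {U : Set (Fin n → K)} (hUlc : IsLocallyCartesian U)
    (hloc : ∀ x ∈ U, ∃ C ∈ nhdsWithin x U, C ⊆ U ∧ IsCompact C)
    {x : Fin n → K} (hx : x ∈ U) :
    ∃ (P Op : Set (Fin n → K)), IsOpen Op ∧ P = U ∩ Op ∧ x ∈ P ∧
      IsCartesianSet P ∧ IsSigmaCompact P := by
  obtain ⟨V, hxV, hVU, ⟨O, hOopen, hVeq⟩, ⟨W, hVpi, hWpp⟩⟩ := hUlc x hx
  obtain ⟨C, hCnhd, hCU, hCcpt⟩ := hloc x hx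
  obtain ⟨O', hO'open, hxO', hO'sub⟩ := mem_nhdsWithin.mp hCnhd
  have hxO : x ∈ O := by rw [hVeq] at hxV; exact hxV.2
  have hxW : ∀ i, x i ∈ W i := by
    rw [hVpi] at hxV; exact fun i => hxV i (Set.mem_univ i)
  have hOO' : IsOpen (O ∩ O') := hOopen.inter hO'open
  obtain ⟨I, u, hu, husub⟩ := isOpen_pi_iff.mp hOO' x ⟨hxO, hxO'⟩
  classical
  set A : Fin n → Set K := fun i => if i ∈ I then u i else Set.univ with hA
  have hAopen : ∀ i, IsOpen (A i) := by
    intro i; rw [hA]; dsimp only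
    split
    · exact (hu i ‹_›).1
    · exact isOpen_univ
  have hxA : ∀ i, x i ∈ A i := by
    intro i; rw [hA]; dsimp only
    split
    · exact (hu i ‹_›).2
    · exact Set.mem_univ _
  have hApi : Set.univ.pi A ⊆ O ∩ O' := by
    intro y hy
    apply husub
    intro i hi
    have := hy i (Set.mem_univ i)
    rw [hA] at this; dsimp only at this
    rw [Finset.mem_coe] at hi
    rwa [if_pos hi] at this
  have hBex : ∀ i, ∃ B : Set K, IsOpen B ∧ x i ∈ B ∧ closure B ⊆ A i := by
    intro i
    obtain ⟨t, htn, htc, hts⟩ := exists_mem_nhds_isClosed_subset ((hAopen i).mem_nhds (hxA i))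
    refine ⟨interior t, isOpen_interior, mem_interior_iff_mem_nhds.mpr htn, ?_⟩
    refine (closure_mono interior_subset).trans ?_
    rw [htc.closure_eq]
    exact hts
  choose B hBopen hxB hclB using hBex
  set T : Fin n → Set K := fun i => W i ∩ closure (B i) with hT
  have hpiT : Set.univ.pi T = V ∩ Set.univ.pi (fun i => closure (B i)) := by
    rw [hVpi, ← Set.pi_inter_distrib]
  have hclBA : Set.univ.pi (fun i => closure (B i)) ⊆ Set.univ.pi A :=
    Set.pi_mono fun i _ => hclB i
  have hTC : Set.univ.pi T ⊆ C := by
    rw [hpiT]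
    intro y hy
    refine hO'sub ⟨(hApi (hclBA hy.2)).2, ?_⟩
    rw [hVeq] at hy
    exact hy.1.1
  have hTclosed : IsClosed (Set.univ.pi T) := by
    apply isClosed_of_closure_subset
    intro y hy
    have hyC : y ∈ C := (hCcpt.isClosed.closure_subset_iff.mpr hTC) hy
    have hyB : y ∈ Set.univ.pi (fun i => closure (B i)) := by
      refine closure_minimal ?_ (isClosed_set_pi fun i _ => isClosed_closure) hy
      rw [hpiT]; exact Set.inter_subset_right
    have hyV : y ∈ V := by
      rw [hVeq]
      exact ⟨hCU hyC, (hApi (hclBA hyB)).1⟩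
    rw [hpiT]
    exact ⟨hyV, hyB⟩
  have hpiTc : IsCompact (Set.univ.pi T) := hCcpt.of_isClosed_subset hTclosed hTC
  have hxT : ∀ i, x i ∈ T i := fun i => ⟨hxW i, subset_closure (hxB i)⟩
  have hTic : ∀ i, IsCompact (T i) := by
    intro i
    have hne : (Set.univ.pi T).Nonempty := ⟨x, fun j _ => hxT j⟩
    rw [← Set.eval_image_univ_pi hne]
    exact hpiTc.image (continuous_apply i)
  have key : ∀ i, ∃ (Θ : Set K) (D : ℕ → Set K), IsOpen Θ ∧ x i ∈ Θ ∧ Monotone D ∧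
      (∀ m, IsCompact (D m)) ∧ T i ∩ Θ ⊆ B i ∧ T i ∩ Θ = ⋃ m, D m :=
    fun i => urysohn_trace (hTic i) (hBopen i) (hxT i) (hxB i)
  choose Θ D hΘopen hxΘ hDmono hDcpt hΘB hΘD using key
  set S : Fin n → Set K := fun i => W i ∩ (Θ i ∩ B i) with hSdef
  have hSeq : ∀ i, S i = T i ∩ Θ i := by
    intro i
    apply Set.Subset.antisymm
    · rintro w ⟨hw, hθ, hb⟩
      exact ⟨⟨hw, subset_closure hb⟩, hθ⟩
    · rintro y ⟨hyT, hyΘ⟩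
      exact ⟨hyT.1, hyΘ, hΘB i ⟨hyT, hyΘ⟩⟩
  have hbox : IsOpen (Set.univ.pi (fun i => Θ i ∩ B i)) :=
    isOpen_set_pi Set.finite_univ fun i _ => (hΘopen i).inter (hBopen i)
  refine ⟨Set.univ.pi S, O ∩ Set.univ.pi (fun i => Θ i ∩ B i), hOopen.inter hbox, ?_, ?_, ?_, ?_⟩
  · -- P = U ∩ Op
    have : Set.univ.pi S = Set.univ.pi W ∩ Set.univ.pi (fun i => Θ i ∩ B i) :=
      Set.pi_inter_distrib
    rw [this, ← hVpi, hVeq, Set.inter_assoc]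
  · -- x ∈ P
    exact fun i _ => ⟨hxW i, hxΘ i, hxB i⟩
  · -- cartesian
    refine ⟨S, rfl, fun i => ?_⟩
    have := (hWpp i).open_inter ((hΘopen i).inter (hBopen i))
    rwa [Set.inter_comm] at this
  · -- σ-compact
    exact sigmaCompact_pi D hDmono hDcpt fun i => (hSeq i).trans (hΘD i)

/-- **Countable covers by σ-compact cartesian open pieces** (Lemma `nula1`).
Over a non-discrete Hausdorff topological field `K`, a locally cartesian subset
`U ⊆ K^n` which is locally compact and σ-compact admits a countable cover by relatively
open cartesian subsets of `U`, each of which is σ-compact. -/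
theorem locallyCartesian_countable_cover
    {K : Type*} [Field K] [TopologicalSpace K] [IsTopologicalDivisionRing K] [T2Space K]
    (hK : ¬ DiscreteTopology K)
    (n : ℕ) (hn : 1 ≤ n) (U : Set (Fin n → K)) (hUlc : IsLocallyCartesian U)
    (hloc : ∀ x ∈ U, ∃ C ∈ nhdsWithin x U, C ⊆ U ∧ IsCompact C)
    (hσ : IsSigmaCompact U) :
    ∃ V : ℕ → Set (Fin n → K),
      (∀ k, V k ⊆ U ∧ (∃ O, IsOpen O ∧ V k = U ∩ O) ∧ IsCartesianSet (V k) ∧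
        IsSigmaCompact (V k)) ∧
      U ⊆ ⋃ k, V k := by
  classical
  by_cases hU : U.Nonempty
  · -- main case
    have pointwise : ∀ x, x ∈ U → ∃ (P Op : Set (Fin n → K)), IsOpen Op ∧ P = U ∩ Op ∧
        x ∈ P ∧ IsCartesianSet P ∧ IsSigmaCompact P :=
      fun x hx => pointwise_piece hUlc hloc hx
    choose! P Op hOpopen hPeq hxP hPcart hPσ using pointwise
    obtain ⟨Cs, hCscpt, hCsU⟩ := hσ
    have hCsub : ∀ k, Cs k ⊆ U := fun k => hCsU ▸ Set.subset_iUnion Cs k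
    have hcov : ∀ k, ∃ t : Finset ↥U, Cs k ⊆ ⋃ x ∈ t, Op ↑x := by
      intro k
      have hc : Cs k ⊆ ⋃ x : ↥U, Op ↑x := by
        intro y hy
        have hyU := hCsub k hy
        have : y ∈ P y := hxP y hyU
        rw [hPeq y hyU] at this
        exact Set.mem_iUnion.mpr ⟨⟨y, hyU⟩, this.2⟩
      exact (hCscpt k).elim_finite_subcover (fun x : ↥U => Op ↑x)
        (fun x => hOpopen x x.2) hc
    choose t ht using hcov
    obtain ⟨x₀, hx₀⟩ := hU
    set Sset : Set ↥U := insert ⟨x₀, hx₀⟩ (⋃ k, (t k : Set ↥U)) with hSset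
    have hSctble : Sset.Countable :=
      (Set.countable_iUnion fun k => (t k).countable_toSet).insert _
    obtain ⟨e, he⟩ := hSctble.exists_eq_range ⟨_, Set.mem_insert _ _⟩
    refine ⟨fun k => P ↑(e k), fun k => ?_, ?_⟩
    · have hk : (↑(e k) : Fin n → K) ∈ U := (e k).2
      refine ⟨?_, ⟨Op ↑(e k), hOpopen _ hk, hPeq _ hk⟩, hPcart _ hk, hPσ _ hk⟩
      show P ↑(e k) ⊆ U
      rw [hPeq _ hk]
      exact Set.inter_subset_left
    · intro y hy
      have : y ∈ ⋃ k, Cs k := by rw [hCsU]; exact hy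
      obtain ⟨k, hk⟩ := Set.mem_iUnion.mp this
      obtain ⟨z, hzt, hzy⟩ := Set.mem_iUnion₂.mp (ht k hk)
      have hz : z ∈ Sset := Set.mem_insert_iff.mpr (Or.inr (Set.mem_iUnion.mpr ⟨k, hzt⟩))
      rw [he] at hz
      obtain ⟨m, hm⟩ := hz
      refine Set.mem_iUnion.mpr ⟨m, ?_⟩
      show y ∈ P ↑(e m)
      rw [hm, hPeq _ z.2]
      exact ⟨hy, hzy⟩
  · -- U = ∅
    rw [Set.not_nonempty_iff_eq_empty] at hU
    refine ⟨fun _ => ∅, fun k => ⟨Set.empty_subset _, ⟨∅, isOpen_empty, by rw [Set.inter_empty]⟩,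
      ?_, isSigmaCompact_empty⟩, by rw [hU]; exact Set.empty_subset _⟩
    refine ⟨fun _ => ∅, (Set.univ_pi_eq_empty (i := ⟨0, hn⟩) rfl).symm, fun i => ?_⟩
    intro z hz
    exact absurd hz (Set.notMem_empty z)
end
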